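/- arXiv:1305.5325 — 5 statements merged into one kernel-verified Lean document; each statement's English description precedes it below -/
import Mathlib

section
/- Let 0 < T⁺ < ∞ and let f : (0,T⁺) → [0,∞) be measurable and integrable, and suppose that (1/(T⁺−T)) ∫_T^{T⁺} f(t) dt → 0 as T ↑ T⁺. Then there exists a sequence t_n ↑ T⁺ such that sup_{0 < s ≤ T⁺−t_n} (1/s) ∫_{t_n−s}^{t_n+s} f(t) dt → 0 as n → +∞. -/
open MeasureTheory Filter Topology Set

lemma key_selection (Tp : ℝ) (hTp : 0 < Tp)
    (f : ℝ → ℝ) (hmeas : Measurable f)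
    (hnonneg : ∀ t : ℝ, 0 < t → t < Tp → 0 ≤ f t)
    (hint : IntegrableOn f (Ioo 0 Tp))
    (havg : Tendsto (fun T : ℝ => (1 / (Tp - T)) * ∫ t in T..Tp, f t) (𝓝[<] Tp) (𝓝 0))
    (ε : ℝ) (hε : 0 < ε) (T₀ : ℝ) (hT₀ : T₀ < Tp) :
    ∃ t, T₀ < t ∧ t < Tp ∧ ∀ s : ℝ, 0 < s → s ≤ Tp - t →
      (1 / s) * ∫ x in (t - s)..(t + s), f x ≤ ε := by
  rw [Metric.tendsto_nhdsWithin_nhds] at havg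
  obtain ⟨δ₀, hδ₀pos, hδ₀⟩ := havg (ε / 100) (by positivity)
  set T₁ : ℝ := max T₀ (max (Tp - δ₀ / 4) (3 * Tp / 4)) with hT₁def
  have hT₁lt : T₁ < Tp := max_lt hT₀ (max_lt (by linarith) (by linarith))
  set δ : ℝ := Tp - T₁ with hδdef
  have hδpos : 0 < δ := by simp [hδdef]; linarith
  have hT₁a : Tp - δ₀ / 4 ≤ T₁ := le_max_of_le_right (le_max_left _ _)
  have hT₁b : 3 * Tp / 4 ≤ T₁ := le_max_of_le_right (le_max_right _ _)
  have hδa : δ ≤ δ₀ / 4 := by simp only [hδdef]; linarith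
  have hδb : δ ≤ Tp / 4 := by simp only [hδdef]; linarith
  by_contra hcon
  push_neg at hcon
  have H : ∀ t ∈ Ioo T₁ Tp, ∃ s : ℝ, 0 < s ∧ s ≤ Tp - t ∧
      ε < (1 / s) * ∫ x in (t - s)..(t + s), f x :=
    fun t ht => hcon t (lt_of_le_of_lt (le_max_left _ _) ht.1) ht.2
  choose! s hs0 hs1 hs2 using H
  -- Vitali covering
  obtain ⟨u, hu_sub, hu_disj, hu_cov⟩ :=
    Vitali.exists_disjoint_subfamily_covering_enlargement_closedBall (Ioo T₁ Tp)
      (fun a : ℝ => a) s δ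
      (fun a ha => le_trans (hs1 a ha) (by simp only [hδdef]; linarith [ha.1])) 4 (by norm_num)
  have hu_cnt : u.Countable := by
    apply hu_disj.countable_of_nonempty_interior
    intro b hb
    have hsb : 0 < s b := hs0 b (hu_sub hb)
    exact (Metric.nonempty_ball.2 hsb).mono Metric.ball_subset_interior_closedBall
  have hcov : Ioo T₁ Tp ⊆ ⋃ b ∈ u, Metric.closedBall b (4 * s b) := by
    intro a ha
    obtain ⟨b, hb, hsub⟩ := hu_cov a ha
    exact mem_biUnion hb (hsub (Metric.mem_closedBall_self (hs0 a ha).le))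
  have hmeasE : ENNReal.ofReal δ ≤ ∑' b : u, ENNReal.ofReal (2 * (4 * s b)) := by
    calc ENNReal.ofReal δ = volume (Ioo T₁ Tp) := by rw [Real.volume_Ioo]
    _ ≤ volume (⋃ b ∈ u, Metric.closedBall b (4 * s b)) := measure_mono hcov
    _ ≤ ∑' b : u, volume (Metric.closedBall (b : ℝ) (4 * s b)) :=
        measure_biUnion_le volume hu_cnt _
    _ = ∑' b : u, ENNReal.ofReal (2 * (4 * s b)) := by
        simp only [Real.volume_closedBall]
  have hlt : ENNReal.ofReal (δ / 2) < ∑' b : u, ENNReal.ofReal (2 * (4 * s b)) :=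
    lt_of_lt_of_le (ENNReal.ofReal_lt_ofReal_iff hδpos |>.2 (by linarith)) hmeasE
  rw [ENNReal.tsum_eq_iSup_sum] at hlt
  obtain ⟨v', hv'⟩ := lt_iSup_iff.1 hlt
  set v : Finset ℝ := v'.image Subtype.val with hvdef
  have hv_sub : ∀ b ∈ v, b ∈ u := by
    intro b hb
    simp only [hvdef, Finset.mem_image] at hb
    obtain ⟨c, _, rfl⟩ := hb
    exact c.2
  have hbmem : ∀ b ∈ v, b ∈ Ioo T₁ Tp := fun b hb => hu_sub (hv_sub b hb)
  have hsv : ∀ b ∈ v, 0 < s b := fun b hb => hs0 b (hbmem b hb)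
  have hsum_eq : (∑ b ∈ v', ENNReal.ofReal (2 * (4 * s b))) =
      ENNReal.ofReal (∑ b ∈ v, 8 * s b) := by
    calc (∑ b ∈ v', ENNReal.ofReal (2 * (4 * s b)))
        = ∑ b ∈ v', ENNReal.ofReal (8 * s (b : ℝ)) :=
          Finset.sum_congr rfl fun b _ => congrArg ENNReal.ofReal (by ring)
      _ = ∑ b ∈ v, ENNReal.ofReal (8 * s b) := by
          rw [hvdef, Finset.sum_image (fun a _ b _ h => Subtype.coe_injective h)]
      _ = ENNReal.ofReal (∑ b ∈ v, 8 * s b) := by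
          rw [ENNReal.ofReal_sum_of_nonneg]
          intro b hb
          have := hsv b hb
          positivity
  rw [hsum_eq, ENNReal.ofReal_lt_ofReal_iff_of_nonneg (by positivity)] at hv'
  -- lower bound for sum of radii
  have hsum : δ / 16 < ∑ b ∈ v, s b := by
    have : (∑ b ∈ v, 8 * s b) = 8 * ∑ b ∈ v, s b := by rw [Finset.mul_sum]
    rw [this] at hv'; linarith
  have hIoc_sub : ∀ b ∈ v, Ioc (b - s b) (b + s b) ⊆ Ioc (Tp - 2*δ) Tp := by
    intro b hb
    obtain ⟨hb1, hb2⟩ := hbmem b hb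
    have h1 := hs1 b (hbmem b hb)
    have hδ' : δ = Tp - T₁ := hδdef
    exact Ioc_subset_Ioc (by linarith) (by linarith)
  have hpos2 : (0:ℝ) < Tp - 2*δ := by linarith
  have hint2 : IntegrableOn f (Ioc (Tp - 2*δ) Tp) := by
    rw [integrableOn_Ioc_iff_integrableOn_Ioo]
    exact hint.mono_set (Ioo_subset_Ioo (by linarith) le_rfl)
  have hintb : ∀ b ∈ v, IntegrableOn f (Ioc (b - s b) (b + s b)) :=
    fun b hb => hint2.mono_set (hIoc_sub b hb)
  have hfnn : 0 ≤ᵐ[volume.restrict (Ioc (Tp - 2*δ) Tp)] f := by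
    rw [EventuallyLE, ae_restrict_iff' measurableSet_Ioc]
    have hne : ∀ᵐ x : ℝ, x ≠ Tp := by
      rw [ae_iff]
      have : {x : ℝ | ¬x ≠ Tp} = {Tp} := by ext x; simp
      rw [this]
      exact Real.volume_singleton
    filter_upwards [hne] with x hx hx2
    exact hnonneg x (lt_trans hpos2 hx2.1) (lt_of_le_of_ne hx2.2 hx)
  have hdisj : (↑v : Set ℝ).Pairwise
      (Function.onFun Disjoint fun b => Ioc (b - s b) (b + s b)) := by
    intro a ha b hb hab
    have hd := hu_disj (hv_sub a ha) (hv_sub b hb) hab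
    refine Disjoint.mono ?_ ?_ hd <;>
      · intro x hx
        simp only [Real.closedBall_eq_Icc]
        exact Ioc_subset_Icc_self hx
  have hsum_int : ∑ b ∈ v, ∫ x in Ioc (b - s b) (b + s b), f x =
      ∫ x in ⋃ b ∈ v, Ioc (b - s b) (b + s b), f x :=
    (integral_biUnion_finset v (fun b _ => measurableSet_Ioc) hdisj hintb).symm
  have hmono : ∫ x in ⋃ b ∈ v, Ioc (b - s b) (b + s b), f x ≤
      ∫ x in Ioc (Tp - 2*δ) Tp, f x :=
    setIntegral_mono_set hint2 hfnn (HasSubset.Subset.eventuallyLE (iUnion₂_subset hIoc_sub))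
  have hlow : ∀ b ∈ v, ε * s b ≤ ∫ x in Ioc (b - s b) (b + s b), f x := by
    intro b hb
    have hsb := hsv b hb
    have h2 := hs2 b (hbmem b hb)
    rw [intervalIntegral.integral_of_le (by linarith)] at h2
    have h3 := mul_lt_mul_of_pos_right h2 hsb
    have h4 : 1 / s b * (∫ x in Ioc (b - s b) (b + s b), f x) * s b
        = ∫ x in Ioc (b - s b) (b + s b), f x := by
      field_simp
    rw [h4] at h3
    exact h3.le
  have hmain : ε * (δ/16) ≤ ∫ x in Ioc (Tp - 2*δ) Tp, f x := by
    calc ε * (δ/16) ≤ ε * ∑ b ∈ v, s b :=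
          mul_le_mul_of_nonneg_left (by linarith) hε.le
    _ = ∑ b ∈ v, ε * s b := Finset.mul_sum _ _ _
    _ ≤ ∑ b ∈ v, ∫ x in Ioc (b - s b) (b + s b), f x := Finset.sum_le_sum hlow
    _ = ∫ x in ⋃ b ∈ v, Ioc (b - s b) (b + s b), f x := hsum_int
    _ ≤ ∫ x in Ioc (Tp - 2*δ) Tp, f x := hmono
  have hdist := hδ₀ (show Tp - 2*δ ∈ Iio Tp from by simp only [mem_Iio]; linarith)
    (by rw [Real.dist_eq, abs_of_nonpos (by linarith)]; linarith)
  rw [Real.dist_eq, sub_zero] at hdist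
  have h1 : 1 / (Tp - (Tp - 2*δ)) * ∫ t in (Tp - 2*δ)..Tp, f t < ε / 100 :=
    lt_of_le_of_lt (le_abs_self _) hdist
  have h2δ : (0:ℝ) < 2*δ := by linarith
  rw [intervalIntegral.integral_of_le (by linarith), show Tp - (Tp - 2*δ) = 2*δ from by ring,
    one_div, inv_mul_eq_div] at h1
  have h2 : ∫ x in Ioc (Tp - 2*δ) Tp, f x < ε / 100 * (2*δ) := (div_lt_iff₀ h2δ).1 h1
  nlinarith [mul_pos hε hδpos]

/-- if `f ≥ 0` is integrable on `(0,T⁺)` and its averages over `[T,T⁺]`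
vanish as `T ↑ T⁺`, then there is a sequence `tₙ ↑ T⁺` along which the maximal local
averages of `f` centered at `tₙ`, at all scales `0 < s ≤ T⁺ − tₙ`, tend to `0`. -/
theorem vanishing_average_selection_blowup
    (Tp : ℝ) (hTp : 0 < Tp)
    (f : ℝ → ℝ) (hmeas : Measurable f)
    (hnonneg : ∀ t : ℝ, 0 < t → t < Tp → 0 ≤ f t)
    (hint : IntegrableOn f (Ioo 0 Tp))
    (havg : Tendsto (fun T : ℝ => (1 / (Tp - T)) * ∫ t in T..Tp, f t) (𝓝[<] Tp) (𝓝 0)) :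
    ∃ tn : ℕ → ℝ, Monotone tn ∧ (∀ n, tn n < Tp) ∧ Tendsto tn atTop (𝓝 Tp) ∧
      ∀ ε > 0, ∃ N : ℕ, ∀ n ≥ N, ∀ s : ℝ, 0 < s → s ≤ Tp - tn n →
        (1 / s) * ∫ t in (tn n - s)..(tn n + s), f t ≤ ε := by
  have step : ∀ (n : ℕ) (T : ℝ), T < Tp → ∃ t, T < t ∧
      (Tp - 1/(n+1) < t ∧ t < Tp ∧ ∀ s : ℝ, 0 < s → s ≤ Tp - t →
        (1 / s) * ∫ x in (t - s)..(t + s), f x ≤ 1/(n+1)) := by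
    intro n T hT
    have hpos : (0:ℝ) < 1/(n+1) := by positivity
    obtain ⟨t, ht1, ht2, ht3⟩ := key_selection Tp hTp f hmeas hnonneg hint havg
      (1/(n+1)) hpos (max T (Tp - 1/(n+1))) (max_lt hT (by linarith))
    exact ⟨t, lt_of_le_of_lt (le_max_left _ _) ht1,
      lt_of_le_of_lt (le_max_right _ _) ht1, ht2, ht3⟩
  obtain ⟨t0, _, ht0⟩ := step 0 (Tp - 1) (by linarith)
  set F : ℕ → {t : ℝ // t < Tp} := fun n => Nat.rec ⟨t0, ht0.2.1⟩
    (fun n p => ⟨(step (n+1) p.1 p.2).choose, (step (n+1) p.1 p.2).choose_spec.2.2.1⟩) n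
    with hF
  have hQ : ∀ n : ℕ, Tp - 1/(n+1) < (F n).1 ∧ (F n).1 < Tp ∧
      ∀ s : ℝ, 0 < s → s ≤ Tp - (F n).1 →
        (1 / s) * ∫ x in ((F n).1 - s)..((F n).1 + s), f x ≤ 1/(n+1) := by
    intro n
    cases n with
    | zero => exact ht0
    | succ n => exact (step (n+1) (F n).1 (F n).2).choose_spec.2
  have hlt : ∀ n : ℕ, (F n).1 < (F (n+1)).1 :=
    fun n => (step (n+1) (F n).1 (F n).2).choose_spec.1
  refine ⟨fun n => (F n).1, monotone_nat_of_le_succ (fun n => (hlt n).le),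
    fun n => (F n).2, ?_, ?_⟩
  · refine tendsto_of_tendsto_of_tendsto_of_le_of_le (g := fun n : ℕ => Tp - 1/(n+1))
      (h := fun _ : ℕ => Tp) ?_ tendsto_const_nhds
      (fun n => (hQ n).1.le) (fun n => (F n).2.le)
    have := tendsto_const_nhds (x := Tp) (f := atTop (α := ℕ)) |>.sub
      tendsto_one_div_add_atTop_nhds_zero_nat
    simpa using this
  · intro ε hε
    obtain ⟨N, hN⟩ := exists_nat_one_div_lt hε
    refine ⟨N, fun n hn s hs1 hs2 => ?_⟩
    refine le_trans ((hQ n).2.2 s hs1 hs2) (le_trans ?_ hN.le)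
    apply one_div_le_one_div_of_le (by positivity)
    have : (N : ℝ) ≤ n := Nat.cast_le.2 hn
    linarith
end

section
/- There exists a universal constant C > 0 such that for every C¹ function γ : ℝ × (0,∞) → ℝ with A := sup_{t∈ℝ} (∫₀^∞ ((∂ᵣγ(t,r))² + (∂ₜγ(t,r))²) r dr)^{1/2} < ∞, and for all times s, t ∈ ℝ and radii 0 < q < r, one has |γ(t,r) − γ(s,q)|² ≤ C · ( ln(r/q) + (t−s)²/(q(r−q)) ) · A². -/
open MeasureTheory Filter Topology Set
open scoped ENNReal

noncomputable section

/-- `G(x) = ∫₀ˣ |g(y)| dy`. -/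
def Gfun (g : ℝ → ℝ) (x : ℝ) : ℝ := ∫ y in (0:ℝ)..x, |g y|

/-- Assumption (A1): `G(x) → ±∞` as `x → ±∞`. -/
def A1 (g : ℝ → ℝ) : Prop := Tendsto (Gfun g) atTop atTop ∧ Tendsto (Gfun g) atBot atBot

/-- Assumption (A2): the zero set `𝒱` of `g` is discrete. -/
def A2 (g : ℝ → ℝ) : Prop :=
  ∀ ℓ : ℝ, g ℓ = 0 → ∃ ε > 0, ∀ x : ℝ, g x = 0 → |x - ℓ| < ε → x = ℓ

/-- Assumption (A3): `g'(ℓ) ∈ {−1,1}` for every zero `ℓ` of `g`. -/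
def A3 (g : ℝ → ℝ) : Prop := ∀ ℓ : ℝ, g ℓ = 0 → deriv g ℓ = 1 ∨ deriv g ℓ = -1

/-- Time derivative `∂ₜψ(t,r)`. -/
def pdt (ψ : ℝ → ℝ → ℝ) (t r : ℝ) : ℝ := deriv (fun s => ψ s r) t
/-- Radial derivative `∂ᵣψ(t,r)`. -/
def pdr (ψ : ℝ → ℝ → ℝ) (t r : ℝ) : ℝ := deriv (fun ρ => ψ t ρ) r
/-- Second time derivative `∂ₜₜψ(t,r)`. -/
def pdtt (ψ : ℝ → ℝ → ℝ) (t r : ℝ) : ℝ := deriv (fun s => pdt ψ s r) t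
/-- Second radial derivative `∂ᵣᵣψ(t,r)`. -/
def pdrr (ψ : ℝ → ℝ → ℝ) (t r : ℝ) : ℝ := deriv (fun ρ => pdr ψ t ρ) r

/-- Energy of a pair `(φ₀, φ₁)` on a set `s ⊆ (0,∞)` of radii:
`∫_s (φ₁² + (∂ᵣφ₀)² + g(φ₀)²/r²) r dr`. -/
def energyOn (g : ℝ → ℝ) (φ₀ φ₁ : ℝ → ℝ) (s : Set ℝ) : ℝ≥0∞ :=
  ∫⁻ r in s, ENNReal.ofReal (((φ₁ r)^2 + (deriv φ₀ r)^2 + (g (φ₀ r))^2 / r^2) * r)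

/-- Squared `H × L²` norm of a pair `(φ₀, φ₁)` on a set `s ⊆ (0,∞)` of radii:
`∫_s (φ₁² + (∂ᵣφ₀)² + φ₀²/r²) r dr`. -/
def HLnormSqOn (φ₀ φ₁ : ℝ → ℝ) (s : Set ℝ) : ℝ≥0∞ :=
  ∫⁻ r in s, ENNReal.ofReal (((φ₁ r)^2 + (deriv φ₀ r)^2 + (φ₀ r)^2 / r^2) * r)

/-- Squared `H` norm of a single function on a set `s ⊆ (0,∞)` of radii. -/
def HnormSqOn (φ : ℝ → ℝ) (s : Set ℝ) : ℝ≥0∞ :=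
  ∫⁻ r in s, ENNReal.ofReal (((deriv φ r)^2 + (φ r)^2 / r^2) * r)

/-- `ψ` is a classical solution of the equivariant wave map equation (WM) on `I × (0,∞)`. -/
def IsWaveMapOn (g : ℝ → ℝ) (ψ : ℝ → ℝ → ℝ) (I : Set ℝ) : Prop :=
  ContDiffOn ℝ 2 (fun p : ℝ × ℝ => ψ p.1 p.2) (I ×ˢ Ioi (0:ℝ)) ∧
  ∀ t ∈ I, ∀ r ∈ Ioi (0:ℝ),
    pdtt ψ t r - pdrr ψ t r - pdr ψ t r / r + g (ψ t r) * deriv g (ψ t r) / r^2 = 0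

/-- `φ` is a classical solution of the linearized equation (LW) with coefficient `k²` on
`I × (0,∞)`. -/
def IsLinWaveOn (k : ℝ) (φ : ℝ → ℝ → ℝ) (I : Set ℝ) : Prop :=
  ContDiffOn ℝ 2 (fun p : ℝ × ℝ => φ p.1 p.2) (I ×ˢ Ioi (0:ℝ)) ∧
  ∀ t ∈ I, ∀ r ∈ Ioi (0:ℝ),
    pdtt φ t r - pdrr φ t r - pdr φ t r / r + k^2 * φ t r / r^2 = 0

/-- A finite-energy classical solution of the linearized equation (LW), defined for all times. -/
def IsFiniteEnergyLinWave (k : ℝ) (φ : ℝ → ℝ → ℝ) : Prop :=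
  IsLinWaveOn k φ univ ∧ ∃ C : ℝ≥0∞, C < ⊤ ∧ ∀ t : ℝ, HLnormSqOn (φ t) (pdt φ t) (Ioi 0) ≤ C

/-- A (possibly constant) harmonic map: a finite-energy `C²` solution of
`Q'' + Q'/r = f(Q)/r²` on `(0,∞)`, together with its limits at `r = 0` and `r = ∞`,
which belong to the zero set `𝒱` of `g`. -/
structure HarmonicMap (g : ℝ → ℝ) where
  Q : ℝ → ℝ
  Q0 : ℝ
  Qinf : ℝ
  smooth : ContDiffOn ℝ 2 Q (Ioi 0)
  eqn : ∀ r ∈ Ioi (0:ℝ), deriv (deriv Q) r + deriv Q r / r = g (Q r) * deriv g (Q r) / r^2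
  finiteEnergy : energyOn g Q (fun _ => 0) (Ioi 0) < ⊤
  lim_zero : Tendsto Q (𝓝[>] (0:ℝ)) (𝓝 Q0)
  lim_infty : Tendsto Q atTop (𝓝 Qinf)
  zero_mem : g Q0 = 0
  infty_mem : g Qinf = 0

/-- The interval `[r₁, r₂] ∩ (0,∞)`, where `r₂` may be `+∞` (an extended real). -/
def sIcc (r₁ : ℝ) (r₂ : EReal) : Set ℝ := {r : ℝ | r₁ ≤ r ∧ (r : EReal) ≤ r₂} ∩ Ioi 0

/-- The open interval `(r₁, r₂)`, where `r₂` may be `+∞` (an extended real). -/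
def sIoo (r₁ : ℝ) (r₂ : EReal) : Set ℝ := {r : ℝ | r₁ < r ∧ (r : EReal) < r₂}

/-- The filter of approach to the (possibly infinite) point `b` within the set `s ⊆ ℝ`. -/
def approach (s : Set ℝ) (b : EReal) : Filter ℝ :=
  Filter.comap (fun r : ℝ => (r : EReal)) (𝓝 b) ⊓ Filter.principal s

end

/-
Fix an intermediate radius `ρ ∈ (q, r]` and split `γ(t,r) − γ(s,q)` into a radial increment at
time `t` from `ρ` to `r`, a temporal increment at radius `ρ`, and a radial increment at time `s`
from `q` to `ρ`. By the fundamental theorem of calculus and Cauchy–Schwarz with weight `x`, a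
radial increment from `a` to `b` is at most `A² ln(b/a)`, and the two logarithms add up to
`ln(r/q)`. A temporal increment is at most `|t − s| ∫ₛᵗ (∂ₜγ)²`, which need not be small at a
given radius; but `∫_q^∞ (∂ₜγ)² ≤ A²/q` at every time, so its mean over `ρ ∈ (q, r]` is at most
`(t − s)² A² / (q (r − q))`, and some `ρ` does no worse than the mean.
-/

open Interval

theorem ENNReal.sq_lintegral_mul_le {α : Type*} [MeasurableSpace α] {μ : Measure α}
    {f g : α → ℝ≥0∞} (hf : AEMeasurable f μ) (hg : AEMeasurable g μ) :
    (∫⁻ a, f a * g a ∂μ) ^ 2 ≤ (∫⁻ a, f a ^ 2 ∂μ) * ∫⁻ a, g a ^ 2 ∂μ := by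
  have h := ENNReal.lintegral_mul_le_Lp_mul_Lq μ Real.HolderConjugate.two_two hf hg
  simp only [Pi.mul_apply, ENNReal.rpow_two] at h
  calc (∫⁻ a, f a * g a ∂μ) ^ 2
      ≤ ((∫⁻ a, f a ^ 2 ∂μ) ^ (1 / 2 : ℝ) * (∫⁻ a, g a ^ 2 ∂μ) ^ (1 / 2 : ℝ)) ^ 2 := by
        gcongr
    _ = (∫⁻ a, f a ^ 2 ∂μ) * ∫⁻ a, g a ^ 2 ∂μ := by
        rw [mul_pow, ← ENNReal.rpow_two, ← ENNReal.rpow_two, ← ENNReal.rpow_mul,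
          ← ENNReal.rpow_mul]
        norm_num

theorem ENNReal.ofReal_sqrt_sq (u : ℝ) : ENNReal.ofReal √u ^ 2 = ENNReal.ofReal u := by
  rw [← ENNReal.ofReal_pow (Real.sqrt_nonneg u), Real.sq_sqrt', ENNReal.ofReal_max,
    ENNReal.ofReal_zero, max_zero]

theorem lintegral_Ioc_ofReal_inv {a b : ℝ} (ha : 0 < a) (hab : a ≤ b) :
    ∫⁻ x in Ioc a b, ENNReal.ofReal x⁻¹ = ENNReal.ofReal (Real.log (b / a)) := by
  have hinv : IntegrableOn (fun x : ℝ => x⁻¹) (Ioc a b) :=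
    (continuousOn_inv₀.mono fun x (hx : x ∈ Icc a b) => (ha.trans_le hx.1).ne').integrableOn_Icc
      |>.mono_set Ioc_subset_Icc_self
  rw [← ofReal_integral_eq_lintegral_ofReal hinv
    ((ae_restrict_iff' measurableSet_Ioc).2 (.of_forall fun x hx => inv_nonneg.2
      (ha.trans hx.1).le)), ← intervalIntegral.integral_of_le hab,
    integral_inv_of_pos ha (ha.trans_le hab)]

theorem ofReal_sq_sub_le_lintegral_mul_lintegral {f f' w : ℝ → ℝ} {a b : ℝ}
    (hf : ∀ x ∈ uIcc a b, HasDerivAt f (f' x) x) (hf' : IntervalIntegrable f' volume a b)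
    (hw : Measurable w) (hw_pos : ∀ x ∈ Ι a b, 0 < w x) :
    ENNReal.ofReal ((f b - f a) ^ 2) ≤
      (∫⁻ x in Ι a b, ENNReal.ofReal (f' x ^ 2 * w x)) * ∫⁻ x in Ι a b, ENNReal.ofReal (w x)⁻¹ := by
  have hsplit : ∀ x ∈ Ι a b,
      ‖f' x‖ₑ = ENNReal.ofReal √(f' x ^ 2 * w x) * ENNReal.ofReal √(w x)⁻¹ := by
    intro x hx
    have hwx := hw_pos x hx
    rw [← ENNReal.ofReal_mul (Real.sqrt_nonneg _), ← Real.sqrt_mul (by positivity), mul_assoc,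
      mul_inv_cancel₀ hwx.ne', mul_one, Real.sqrt_sq_eq_abs, Real.enorm_eq_ofReal_abs]
  have hm : AEMeasurable f' (volume.restrict (Ι a b)) := hf'.def'.aemeasurable
  calc ENNReal.ofReal ((f b - f a) ^ 2) = ‖∫ x in Ι a b, f' x‖ₑ ^ 2 := by
        rw [← intervalIntegral.integral_eq_sub_of_hasDerivAt hf hf', ← sq_abs,
          intervalIntegral.abs_integral_eq_abs_integral_uIoc, ENNReal.ofReal_pow (abs_nonneg _),
          Real.enorm_eq_ofReal_abs]
    _ ≤ (∫⁻ x in Ι a b, ‖f' x‖ₑ) ^ 2 := by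
        gcongr
        exact enorm_integral_le_lintegral_enorm _
    _ = (∫⁻ x in Ι a b, ENNReal.ofReal √(f' x ^ 2 * w x) * ENNReal.ofReal √(w x)⁻¹) ^ 2 := by
        rw [setLIntegral_congr_fun measurableSet_uIoc hsplit]
    _ ≤ _ := ENNReal.sq_lintegral_mul_le
          (((hm.pow_const 2).mul hw.aemeasurable).sqrt.ennreal_ofReal)
          hw.aemeasurable.inv.sqrt.ennreal_ofReal
    _ = _ := by simp only [ENNReal.ofReal_sqrt_sq]

theorem ofReal_sq_sub_le_lintegral_sq_mul_abs {f f' : ℝ → ℝ} {a b : ℝ}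
    (hf : ∀ x ∈ uIcc a b, HasDerivAt f (f' x) x) (hf' : IntervalIntegrable f' volume a b) :
    ENNReal.ofReal ((f b - f a) ^ 2) ≤
      (∫⁻ x in Ι a b, ENNReal.ofReal (f' x ^ 2)) * ENNReal.ofReal |b - a| := by
  simpa [Real.volume_uIoc] using
    ofReal_sq_sub_le_lintegral_mul_lintegral hf hf' measurable_const fun _ _ => one_pos

theorem sq_sub_le_mul_log_of_lintegral_sq_mul_le {f f' : ℝ → ℝ} {a b E : ℝ} (ha : 0 < a)
    (hab : a ≤ b) (hf : ∀ x ∈ Icc a b, HasDerivAt f (f' x) x)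
    (hf' : IntervalIntegrable f' volume a b) (hE0 : 0 ≤ E)
    (hE : ∫⁻ x in Ioc a b, ENNReal.ofReal (f' x ^ 2 * x) ≤ ENNReal.ofReal E) :
    (f b - f a) ^ 2 ≤ E * Real.log (b / a) := by
  have h := ofReal_sq_sub_le_lintegral_mul_lintegral (w := fun x => x) (uIcc_of_le hab ▸ hf) hf'
    measurable_id fun x hx => ha.trans (uIoc_of_le hab ▸ hx).1
  rw [uIoc_of_le hab, lintegral_Ioc_ofReal_inv ha hab] at h
  rw [← ENNReal.ofReal_le_ofReal_iff (mul_nonneg hE0 (Real.log_nonneg ((one_le_div ha).2 hab))),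
    ENNReal.ofReal_mul hE0]
  exact h.trans (by gcongr)

theorem lintegral_sq_Ioi_le_inv_mul {u v : ℝ → ℝ} {q : ℝ} (hq : 0 < q) :
    ∫⁻ x in Ioi q, ENNReal.ofReal (v x ^ 2) ≤
      ENNReal.ofReal q⁻¹ * ∫⁻ x in Ioi 0, ENNReal.ofReal ((u x ^ 2 + v x ^ 2) * x) := by
  rw [← lintegral_const_mul' _ _ ENNReal.ofReal_ne_top]
  refine (setLIntegral_mono' measurableSet_Ioi fun x hx => ?_).trans
    (lintegral_mono_set (Ioi_subset_Ioi hq.le))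
  rw [← ENNReal.ofReal_mul (by positivity)]
  gcongr
  rw [inv_mul_eq_div, le_div_iff₀ hq]
  nlinarith [sq_nonneg (u x), sq_nonneg (v x), mem_Ioi.1 hx]

theorem exists_mem_Ioc_le_div_of_lintegral_le {f : ℝ → ℝ} {a b V : ℝ} (hab : a < b)
    (hf : AEMeasurable f (volume.restrict (Ioc a b))) (hV0 : 0 ≤ V)
    (hV : ∫⁻ x in Ioc a b, ENNReal.ofReal (f x) ≤ ENNReal.ofReal V) :
    ∃ x ∈ Ioc a b, f x ≤ V / (b - a) := by
  have hvol : volume (Ioc a b) = ENNReal.ofReal (b - a) := Real.volume_Ioc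
  obtain ⟨x, hx, hle⟩ := exists_le_setLAverage (by simpa [hvol] using hab)
    (by simp [hvol]) hf.ennreal_ofReal
  refine ⟨x, hx, (ENNReal.ofReal_le_ofReal_iff (div_nonneg hV0 (sub_pos.2 hab).le)).1 ?_⟩
  rw [setLAverage_eq, hvol] at hle
  rw [ENNReal.ofReal_div_of_pos (sub_pos.2 hab)]
  exact hle.trans (ENNReal.div_le_div_right hV _)

section

variable {γ : ℝ → ℝ → ℝ}

theorem differentiableAt_uncurry_of_contDiffOn
    (hγ : ContDiffOn ℝ 1 (fun p : ℝ × ℝ => γ p.1 p.2) (univ ×ˢ Ioi 0)) {p : ℝ × ℝ}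
    (hp : 0 < p.2) : DifferentiableAt ℝ (fun p : ℝ × ℝ => γ p.1 p.2) p :=
  (hγ.differentiableOn one_ne_zero).differentiableAt
    ((isOpen_univ.prod isOpen_Ioi).mem_nhds ⟨trivial, hp⟩)

theorem hasDerivAt_pdt (hγ : ContDiffOn ℝ 1 (fun p : ℝ × ℝ => γ p.1 p.2) (univ ×ˢ Ioi 0))
    (τ : ℝ) {ρ : ℝ} (hρ : 0 < ρ) : HasDerivAt (fun σ => γ σ ρ) (pdt γ τ ρ) τ :=
  ((differentiableAt_uncurry_of_contDiffOn hγ (p := (τ, ρ)) hρ).comp (f := fun σ => (σ, ρ)) τ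
    (differentiableAt_id.prodMk (differentiableAt_const ρ))).hasDerivAt

theorem hasDerivAt_pdr (hγ : ContDiffOn ℝ 1 (fun p : ℝ × ℝ => γ p.1 p.2) (univ ×ˢ Ioi 0))
    (τ : ℝ) {ρ : ℝ} (hρ : 0 < ρ) : HasDerivAt (fun x => γ τ x) (pdr γ τ ρ) ρ :=
  ((differentiableAt_uncurry_of_contDiffOn hγ (p := (τ, ρ)) hρ).comp (f := fun x => (τ, x)) ρ
    ((differentiableAt_const τ).prodMk differentiableAt_id)).hasDerivAt

theorem continuousOn_pdt (hγ : ContDiffOn ℝ 1 (fun p : ℝ × ℝ => γ p.1 p.2) (univ ×ˢ Ioi 0)) :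
    ContinuousOn (fun p : ℝ × ℝ => pdt γ p.1 p.2) (univ ×ˢ Ioi 0) := by
  refine ((hγ.continuousOn_fderiv_of_isOpen (isOpen_univ.prod isOpen_Ioi) le_rfl).clm_apply
    (continuousOn_const (c := ((1 : ℝ), (0 : ℝ))))).congr fun p hp => ?_
  exact ((differentiableAt_uncurry_of_contDiffOn hγ hp.2).hasFDerivAt.comp_hasDerivAt p.1
    ((hasDerivAt_id p.1).prodMk (hasDerivAt_const p.1 p.2))).deriv

theorem continuousOn_pdr (hγ : ContDiffOn ℝ 1 (fun p : ℝ × ℝ => γ p.1 p.2) (univ ×ˢ Ioi 0)) :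
    ContinuousOn (fun p : ℝ × ℝ => pdr γ p.1 p.2) (univ ×ˢ Ioi 0) := by
  refine ((hγ.continuousOn_fderiv_of_isOpen (isOpen_univ.prod isOpen_Ioi) le_rfl).clm_apply
    (continuousOn_const (c := ((0 : ℝ), (1 : ℝ))))).congr fun p hp => ?_
  exact ((differentiableAt_uncurry_of_contDiffOn hγ hp.2).hasFDerivAt.comp_hasDerivAt p.2
    ((hasDerivAt_const p.2 p.1).prodMk (hasDerivAt_id p.2))).deriv

theorem sq_radial_sub_le_mul_log
    (hγ : ContDiffOn ℝ 1 (fun p : ℝ × ℝ => γ p.1 p.2) (univ ×ˢ Ioi 0)) {τ a b A : ℝ}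
    (ha : 0 < a) (hab : a ≤ b)
    (hA : ∫⁻ r in Ioi 0, ENNReal.ofReal ((pdr γ τ r ^ 2 + pdt γ τ r ^ 2) * r) ≤
      ENNReal.ofReal (A ^ 2)) :
    (γ τ b - γ τ a) ^ 2 ≤ A ^ 2 * Real.log (b / a) := by
  have hIcc : Icc a b ⊆ Ioi 0 := fun x hx => ha.trans_le hx.1
  refine sq_sub_le_mul_log_of_lintegral_sq_mul_le ha hab
    (fun x hx => hasDerivAt_pdr hγ τ (hIcc hx)) ?_ (sq_nonneg A) ?_
  · refine ContinuousOn.intervalIntegrable ((continuousOn_pdr hγ).comp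
      (continuous_const.prodMk continuous_id).continuousOn fun x hx => ⟨trivial, ?_⟩)
    exact hIcc (uIcc_of_le hab ▸ hx)
  · refine le_trans ?_ hA
    refine (setLIntegral_mono' measurableSet_Ioc fun x hx => ?_).trans
      (lintegral_mono_set fun x hx => ha.trans hx.1)
    have hx0 : 0 ≤ x := (ha.trans hx.1).le
    gcongr
    exact le_add_of_nonneg_right (sq_nonneg _)

theorem lintegral_sq_temporal_sub_le
    (hγ : ContDiffOn ℝ 1 (fun p : ℝ × ℝ => γ p.1 p.2) (univ ×ˢ Ioi 0)) {A q : ℝ} (hq : 0 < q)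
    (hA : ∀ τ, ∫⁻ r in Ioi 0, ENNReal.ofReal ((pdr γ τ r ^ 2 + pdt γ τ r ^ 2) * r) ≤
      ENNReal.ofReal (A ^ 2)) (s t r : ℝ) :
    ∫⁻ ρ in Ioc q r, ENNReal.ofReal ((γ t ρ - γ s ρ) ^ 2) ≤
      ENNReal.ofReal ((t - s) ^ 2 * A ^ 2 / q) := by
  have hpdt : ∀ τ, ∫⁻ ρ in Ioc q r, ENNReal.ofReal (pdt γ τ ρ ^ 2) ≤ ENNReal.ofReal (A ^ 2 / q) :=
    fun τ => calc
      _ ≤ ∫⁻ ρ in Ioi q, ENNReal.ofReal (pdt γ τ ρ ^ 2) := lintegral_mono_set Ioc_subset_Ioi_self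
      _ ≤ ENNReal.ofReal q⁻¹ * ENNReal.ofReal (A ^ 2) :=
          (lintegral_sq_Ioi_le_inv_mul hq).trans (by gcongr; exact hA τ)
      _ = ENNReal.ofReal (A ^ 2 / q) := by
          rw [← ENNReal.ofReal_mul (by positivity), inv_mul_eq_div]
  have hmeas : AEMeasurable (Function.uncurry fun ρ τ => ENNReal.ofReal (pdt γ τ ρ ^ 2))
      ((volume.restrict (Ioc q r)).prod (volume.restrict (Ι s t))) := by
    rw [Measure.prod_restrict]
    refine (ContinuousOn.aemeasurable ?_ (measurableSet_Ioc.prod measurableSet_uIoc)).ennreal_ofReal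
    exact ((continuousOn_pdt hγ).comp continuous_swap.continuousOn
      fun z hz => ⟨trivial, hq.trans hz.1.1⟩).pow 2
  calc ∫⁻ ρ in Ioc q r, ENNReal.ofReal ((γ t ρ - γ s ρ) ^ 2)
      ≤ ∫⁻ ρ in Ioc q r, (∫⁻ τ in Ι s t, ENNReal.ofReal (pdt γ τ ρ ^ 2)) *
          ENNReal.ofReal |t - s| := by
        refine setLIntegral_mono' measurableSet_Ioc fun ρ hρ =>
          ofReal_sq_sub_le_lintegral_sq_mul_abs (fun τ _ => hasDerivAt_pdt hγ τ (hq.trans hρ.1)) ?_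
        exact ContinuousOn.intervalIntegrable ((continuousOn_pdt hγ).comp
          (continuous_id.prodMk continuous_const).continuousOn fun τ _ => ⟨trivial, hq.trans hρ.1⟩)
    _ = (∫⁻ τ in Ι s t, ∫⁻ ρ in Ioc q r, ENNReal.ofReal (pdt γ τ ρ ^ 2)) *
          ENNReal.ofReal |t - s| := by
        rw [lintegral_mul_const' _ _ ENNReal.ofReal_ne_top, lintegral_lintegral_swap hmeas]
    _ ≤ (∫⁻ τ in Ι s t, ENNReal.ofReal (A ^ 2 / q)) * ENNReal.ofReal |t - s| := by
        gcongr with τ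
        exact hpdt τ
    _ = ENNReal.ofReal ((t - s) ^ 2 * A ^ 2 / q) := by
        rw [setLIntegral_const, Real.volume_uIoc, ← ENNReal.ofReal_mul (by positivity),
          ← ENNReal.ofReal_mul (by positivity), mul_assoc, ← sq, sq_abs]
        ring_nf

theorem exists_mem_Ioc_sq_temporal_sub_le
    (hγ : ContDiffOn ℝ 1 (fun p : ℝ × ℝ => γ p.1 p.2) (univ ×ˢ Ioi 0)) {A q r : ℝ} (hq : 0 < q)
    (hqr : q < r)
    (hA : ∀ τ, ∫⁻ r in Ioi 0, ENNReal.ofReal ((pdr γ τ r ^ 2 + pdt γ τ r ^ 2) * r) ≤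
      ENNReal.ofReal (A ^ 2)) (s t : ℝ) :
    ∃ ρ ∈ Ioc q r, (γ t ρ - γ s ρ) ^ 2 ≤ (t - s) ^ 2 / (q * (r - q)) * A ^ 2 := by
  have hslice : ∀ τ, ContinuousOn (γ τ) (Ioc q r) := fun τ x hx =>
    (hasDerivAt_pdr hγ τ (hq.trans hx.1)).continuousAt.continuousWithinAt
  obtain ⟨ρ, hρ, hle⟩ := exists_mem_Ioc_le_div_of_lintegral_le hqr
    ((((hslice t).sub (hslice s)).pow 2).aemeasurable measurableSet_Ioc) (by positivity)
    (lintegral_sq_temporal_sub_le hγ hq hA s t r)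
  exact ⟨ρ, hρ, hle.trans_eq (by field_simp)⟩

end

/-- pointwise space-time oscillation estimate: there is a universal
constant `C > 0` such that any `C¹` function `γ` on `ℝ × (0,∞)` whose weighted space-time
gradient is uniformly bounded by `A` satisfies
`|γ(t,r) − γ(s,q)|² ≤ C (ln(r/q) + (t−s)²/(q(r−q))) A²` for all times `s,t` and radii
`0 < q < r`. -/
theorem oscillation_estimate :
    ∃ C > (0:ℝ), ∀ γ : ℝ → ℝ → ℝ,
      ContDiffOn ℝ 1 (fun p : ℝ × ℝ => γ p.1 p.2) (univ ×ˢ Ioi (0:ℝ)) →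
      ∀ A : ℝ,
      (∀ t : ℝ, (∫⁻ r in Ioi (0:ℝ),
          ENNReal.ofReal (((pdr γ t r)^2 + (pdt γ t r)^2) * r)) ≤ ENNReal.ofReal (A^2)) →
      ∀ s t q r : ℝ, 0 < q → q < r →
        (γ t r - γ s q)^2 ≤ C * (Real.log (r / q) + (t - s)^2 / (q * (r - q))) * A^2 := by
  refine ⟨3, by norm_num, fun γ hγ A hA s t q r hq hqr => ?_⟩
  obtain ⟨ρ, ⟨hqρ, hρr⟩, hmid⟩ := exists_mem_Ioc_sq_temporal_sub_le hγ hq hqr hA s t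
  have hρ : 0 < ρ := hq.trans hqρ
  have hr : 0 < r := hρ.trans_le hρr
  have hout := sq_radial_sub_le_mul_log hγ hρ hρr (hA t)
  have hin := sq_radial_sub_le_mul_log hγ hq hqρ.le (hA s)
  have hlog : Real.log (r / ρ) + Real.log (ρ / q) = Real.log (r / q) := by
    rw [← Real.log_mul (by positivity) (by positivity), div_mul_div_cancel₀ hρ.ne']
  -- `(x + y + z)² ≤ 3 (x² + y² + z²)` for the three increments
  nlinarith [sq_nonneg (γ t r - γ t ρ - (γ t ρ - γ s ρ)),
    sq_nonneg (γ t ρ - γ s ρ - (γ s ρ - γ s q)), sq_nonneg (γ t r - γ t ρ - (γ s ρ - γ s q))]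
end

section
/- There exists a constant c > 0 such that for all 0 ≤ r₁ < r₂ ≤ ∞ with r₂ ≥ 2r₁, and every C¹ function φ on [r₁,r₂] ∩ (0,∞) with ‖φ‖_{H([r₁,r₂])} := (∫_{r₁}^{r₂} ((φ'(r))² + φ(r)²/r²) r dr)^{1/2} < ∞, one has sup_{r ∈ [r₁,r₂] ∩ (0,∞)} |φ(r)| ≤ c · ‖φ‖_{H([r₁,r₂])}. -/
open MeasureTheory Filter Topology Set
open scoped ENNReal

/-!
Since `(φ²)' = 2φφ'` and `2|φφ'| ≤ (φ'² + φ²/r²) r` by AM-GM, the oscillation of `φ²` over the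
interval is at most `‖φ‖²_H`. As `r₂ ≥ 2r₁`, the interval contains some `[a, 2a]` with `a > 0`, over
which `∫ φ²/r dr ≥ (min φ²)/2`; so `φ² ≤ 2‖φ‖²_H` somewhere and `φ² ≤ 3‖φ‖²_H` everywhere,
giving `c = √3`.
-/

theorem enorm_sub_le_setLIntegral_enorm_deriv {E : Type*} [NormedAddCommGroup E]
    [NormedSpace ℝ E] [CompleteSpace E] {f : ℝ → E} {a b : ℝ} (hab : a ≤ b)
    (hcont : ContinuousOn f (Icc a b)) (hdiff : DifferentiableOn ℝ f (Ioo a b)) :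
    ‖f b - f a‖ₑ ≤ ∫⁻ x in Ioo a b, ‖deriv f x‖ₑ := by
  by_cases hfin : ∫⁻ x in Ioo a b, ‖deriv f x‖ₑ = ⊤
  · simp [hfin]
  have hint : IntervalIntegrable (deriv f) volume a b := by
    rw [intervalIntegrable_iff_integrableOn_Ioo_of_le hab]
    exact ⟨(stronglyMeasurable_deriv f).aestronglyMeasurable, lt_top_iff_ne_top.mpr hfin⟩
  rw [← intervalIntegral.integral_eq_sub_of_hasDerivAt_of_le hab hcont
    (fun x hx => (hdiff.differentiableAt (isOpen_Ioo.mem_nhds hx)).hasDerivAt) hint,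
    intervalIntegral.integral_of_le hab, Measure.restrict_congr_set Ioo_ae_eq_Ioc.symm]
  exact enorm_integral_le_lintegral_enorm _

theorem abs_two_mul_mul_le_sq_add_sq_div_sq_mul {x : ℝ} (hx : 0 < x) (u v : ℝ) :
    |2 * u * v| ≤ (v ^ 2 + u ^ 2 / x ^ 2) * x := by
  have hxu : (v ^ 2 + u ^ 2 / x ^ 2) * x = ((|v| * x) ^ 2 + |u| ^ 2) / x := by
    rw [mul_pow, sq_abs, sq_abs]
    field_simp
  rw [hxu, le_div_iff₀ hx, abs_mul, abs_mul, abs_two]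
  nlinarith [sq_nonneg (|v| * x - |u|)]

theorem hnormSqOn_mono {φ : ℝ → ℝ} {s t : Set ℝ} (hst : s ⊆ t) :
    HnormSqOn φ s ≤ HnormSqOn φ t :=
  lintegral_mono_set hst

theorem ofReal_abs_sq_sub_sq_le_hnormSqOn {φ : ℝ → ℝ} {p q : ℝ} (hp : 0 < p) (hpq : p ≤ q)
    (hcont : ContinuousOn φ (Icc p q)) (hdiff : DifferentiableOn ℝ φ (Ioo p q)) :
    ENNReal.ofReal |φ q ^ 2 - φ p ^ 2| ≤ HnormSqOn φ (Ioo p q) := by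
  rw [← Real.enorm_eq_ofReal_abs]
  refine (enorm_sub_le_setLIntegral_enorm_deriv hpq (hcont.pow 2) (hdiff.pow 2)).trans ?_
  refine setLIntegral_mono' measurableSet_Ioo fun x hx => ?_
  have hderiv : deriv (φ ^ 2) x = 2 * φ x * deriv φ x := by
    simpa using ((hdiff.differentiableAt (isOpen_Ioo.mem_nhds hx)).hasDerivAt.pow 2).deriv
  rw [hderiv, Real.enorm_eq_ofReal_abs]
  exact ENNReal.ofReal_le_ofReal (abs_two_mul_mul_le_sq_add_sq_div_sq_mul (hp.trans hx.1) _ _)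

theorem exists_ofReal_sq_le_two_mul_hnormSqOn {φ : ℝ → ℝ} {a : ℝ} (ha : 0 < a)
    (hcont : ContinuousOn φ (Icc a (2 * a))) :
    ∃ s ∈ Icc a (2 * a), ENNReal.ofReal (φ s ^ 2) ≤ 2 * HnormSqOn φ (Icc a (2 * a)) := by
  obtain ⟨s, hs, hmin⟩ :=
    isCompact_Icc.exists_isMinOn (nonempty_Icc.mpr (by linarith)) (hcont.pow 2)
  refine ⟨s, hs, ?_⟩
  have hlower : ∀ x ∈ Icc a (2 * a),
      ENNReal.ofReal (φ s ^ 2 / (2 * a)) ≤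
        ENNReal.ofReal (((deriv φ x) ^ 2 + (φ x) ^ 2 / x ^ 2) * x) := by
    intro x hx
    have hx0 : 0 < x := ha.trans_le hx.1
    refine ENNReal.ofReal_le_ofReal ?_
    calc φ s ^ 2 / (2 * a) ≤ φ x ^ 2 / x :=
          div_le_div₀ (sq_nonneg _) (hmin hx) hx0 hx.2
      _ ≤ ((deriv φ x) ^ 2 + (φ x) ^ 2 / x ^ 2) * x := by
          rw [add_mul, div_mul_eq_mul_div, sq x, ← div_div, mul_div_cancel_right₀ _ hx0.ne']
          nlinarith [sq_nonneg (deriv φ x)]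
  calc ENNReal.ofReal (φ s ^ 2)
      = 2 * ∫⁻ _ in Icc a (2 * a), ENNReal.ofReal (φ s ^ 2 / (2 * a)) := by
        rw [setLIntegral_const, Real.volume_Icc, ← ENNReal.ofReal_mul (by positivity),
          ← ENNReal.ofReal_ofNat 2, ← ENNReal.ofReal_mul zero_le_two]
        congr 1
        field_simp
        ring
    _ ≤ 2 * HnormSqOn φ (Icc a (2 * a)) := by
        gcongr
        exact setLIntegral_mono' measurableSet_Icc hlower

theorem ofReal_abs_sq_sub_sq_le_hnormSqOn_of_ordConnected {φ : ℝ → ℝ} {S : Set ℝ}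
    [S.OrdConnected] (hS : S ⊆ Ioi 0) (hφ : DifferentiableOn ℝ φ S) {p q : ℝ} (hp : p ∈ S)
    (hq : q ∈ S) : ENNReal.ofReal |φ q ^ 2 - φ p ^ 2| ≤ HnormSqOn φ S := by
  wlog hpq : p ≤ q generalizing p q
  · rw [abs_sub_comm]
    exact this hq hp (le_of_not_ge hpq)
  have hIoo : Ioo p q ⊆ S := Ioo_subset_Icc_self.trans (S.Icc_subset hp hq)
  exact (ofReal_abs_sq_sub_sq_le_hnormSqOn (hS hp) hpq
    (hφ.continuousOn.mono (S.Icc_subset hp hq)) (hφ.mono hIoo)).trans (hnormSqOn_mono hIoo)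

theorem ofReal_sq_le_three_mul_hnormSqOn {φ : ℝ → ℝ} {S : Set ℝ} [S.OrdConnected]
    (hS : S ⊆ Ioi 0) (hφ : DifferentiableOn ℝ φ S) {a : ℝ} (ha : 0 < a)
    (haS : Icc a (2 * a) ⊆ S) {r : ℝ} (hr : r ∈ S) :
    ENNReal.ofReal (φ r ^ 2) ≤ 3 * HnormSqOn φ S := by
  obtain ⟨s, hs, hφs⟩ := exists_ofReal_sq_le_two_mul_hnormSqOn ha (hφ.continuousOn.mono haS)
  calc ENNReal.ofReal (φ r ^ 2)
      ≤ ENNReal.ofReal (φ s ^ 2) + ENNReal.ofReal |φ r ^ 2 - φ s ^ 2| := by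
        rw [← ENNReal.ofReal_add (sq_nonneg _) (abs_nonneg _)]
        exact ENNReal.ofReal_le_ofReal (by linarith [le_abs_self (φ r ^ 2 - φ s ^ 2)])
    _ ≤ 2 * HnormSqOn φ (Icc a (2 * a)) + HnormSqOn φ S :=
        add_le_add hφs (ofReal_abs_sq_sub_sq_le_hnormSqOn_of_ordConnected hS hφ (haS hs) hr)
    _ ≤ 2 * HnormSqOn φ S + HnormSqOn φ S := by gcongr; exact hnormSqOn_mono haS
    _ = 3 * HnormSqOn φ S := by ring

instance ordConnected_sIcc (r₁ : ℝ) (r₂ : EReal) : (sIcc r₁ r₂).OrdConnected :=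
  ⟨fun _ hp _ hq _ hx =>
    ⟨⟨hp.1.1.trans hx.1, (EReal.coe_le_coe_iff.mpr hx.2).trans hq.1.2⟩, hp.2.trans_le hx.1⟩⟩

theorem exists_Icc_two_mul_subset_sIcc {r₁ r : ℝ} {r₂ : EReal}
    (h2 : ((2 * r₁ : ℝ) : EReal) ≤ r₂) (hr : r ∈ sIcc r₁ r₂) :
    ∃ a > 0, Icc a (2 * a) ⊆ sIcc r₁ r₂ := by
  have hr0 : 0 < r := hr.2
  refine ⟨max r₁ (r / 2), lt_max_of_lt_right (half_pos hr0), fun x hx => ⟨⟨?_, ?_⟩, ?_⟩⟩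
  · exact (le_max_left _ _).trans hx.1
  · have hx2 : x ≤ 2 * r₁ ∨ x ≤ r := by
      rw [← le_max_iff, ← mul_div_cancel₀ r two_ne_zero, ← mul_max_of_nonneg _ _ zero_le_two]
      exact hx.2
    rcases hx2 with hx2 | hx2
    · exact (EReal.coe_le_coe_iff.mpr hx2).trans h2
    · exact (EReal.coe_le_coe_iff.mpr hx2).trans hr.1.2
  · exact (half_pos hr0).trans_le ((le_max_right _ _).trans hx.1)

/-- weighted Sobolev embedding on intervals `[r₁,r₂]` with `r₂ ≥ 2r₁`:
there is a universal constant `c > 0` such that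
`‖φ‖_{L^∞([r₁,r₂])} ≤ c ‖φ‖_{H([r₁,r₂])}`, where `r₂` may be `+∞`. -/
theorem weighted_sobolev_embedding :
    ∃ c > (0:ℝ), ∀ (r₁ : ℝ) (r₂ : EReal), 0 ≤ r₁ → (r₁ : EReal) < r₂ →
      ((2 * r₁ : ℝ) : EReal) ≤ r₂ →
      ∀ φ : ℝ → ℝ, ContDiffOn ℝ 1 φ (sIcc r₁ r₂) →
      HnormSqOn φ (sIcc r₁ r₂) < ⊤ →
      ∀ r ∈ sIcc r₁ r₂,
        ENNReal.ofReal |φ r| ≤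
          ENNReal.ofReal c * (HnormSqOn φ (sIcc r₁ r₂)) ^ ((1:ℝ)/2) := by
  refine ⟨√3, by positivity, fun r₁ r₂ _ _ h2 φ hφ _ r hr => ?_⟩
  obtain ⟨a, ha, haS⟩ := exists_Icc_two_mul_subset_sIcc h2 hr
  have hsq := ofReal_sq_le_three_mul_hnormSqOn (S := sIcc r₁ r₂) inter_subset_right
    (hφ.differentiableOn one_ne_zero) ha haS hr
  calc ENNReal.ofReal |φ r| = ENNReal.ofReal (φ r ^ 2) ^ ((1:ℝ)/2) := by
        rw [ENNReal.ofReal_rpow_of_nonneg (sq_nonneg _) (by norm_num), ← Real.sqrt_eq_rpow,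
          Real.sqrt_sq_eq_abs]
    _ ≤ (3 * HnormSqOn φ (sIcc r₁ r₂)) ^ ((1:ℝ)/2) := by gcongr
    _ = ENNReal.ofReal √3 * HnormSqOn φ (sIcc r₁ r₂) ^ ((1:ℝ)/2) := by
        rw [ENNReal.mul_rpow_of_nonneg _ _ (by norm_num), Real.sqrt_eq_rpow,
          ← ENNReal.ofReal_rpow_of_nonneg zero_le_three (by norm_num), ENNReal.ofReal_ofNat]
end

section
/- Let c be the universal constant from the weighted Sobolev embedding lemma (‖φ‖_{L^∞} ≤ c‖φ‖_{H([r₁,r₂])} when r₂ ≥ 2r₁). For all 0 ≤ r₁ < r₂ ≤ ∞ and every bounded C¹ function φ on [r₁,r₂] ∩ (0,∞) with ‖φ‖_{H([r₁,r₂])} < ∞, there exists a locally Lipschitz function ψ : (0,∞) → ℝ (piecewise C¹) such that ψ(r) = φ(r) for all r ∈ [r₁,r₂] ∩ (0,∞) and ‖ψ‖_H ≤ ‖φ‖_{H([r₁,r₂])} + 3 ‖φ‖_{L^∞([r₁,r₂])}, where ‖ψ‖²_H = ∫₀^∞ ((∂ᵣψ)² + ψ²/r²) r dr (with ∂ᵣψ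 the a.e. derivative). Moreover, if r₂ ≥ 2r₁ then ‖ψ‖_H ≤ (3c+1) ‖φ‖_{H([r₁,r₂])}. -/
open MeasureTheory Filter Topology Set
open scoped ENNReal

/-! `ψ` is `φ` glued to affine ramps: on `[r₁/2, r₁]` it rises from `0` to `φ r₁`, on
`[r₂, 2r₂]` it falls from `φ r₂` to `0`, and it vanishes beyond. A ramp of height `k` over
`[p, 2p]` has `|ψ'| ≤ k/p` and `|ψ|/r ≤ k/p`, so by the scale invariance of the `H` norm it
contributes at most `3k²` to `‖ψ‖²_H`, whatever `p` is. Two ramps with `k ≤ M` then give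
`‖ψ‖²_H ≤ ‖φ‖²_H + (3M)²`, and when `r₂ ≥ 2r₁` the Sobolev embedding allows `M = c‖φ‖_H`. -/

open scoped NNReal

section LocallyLipschitz

variable {α β γ : Type*} [PseudoEMetricSpace α] [PseudoEMetricSpace β] [PseudoEMetricSpace γ]
  {s : Set α}

lemma LocallyLipschitzOn.comp_lipschitzWith {g : β → γ} {t : Set β} {f : α → β} {K : ℝ≥0}
    (hg : LocallyLipschitzOn t g) (hf : LipschitzWith K f) (hmaps : MapsTo f s t) :
    LocallyLipschitzOn s (g ∘ f) := by
  rw [locallyLipschitzOn_iff_restrict] at hg ⊢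
  exact hg.comp ((hf.lipschitzOnWith (s := s)).mapsToRestrict hmaps).locallyLipschitz

lemma LocallyLipschitzOn.smul {𝕜 E : Type*} [RCLike 𝕜] [NormedAddCommGroup E]
    [NormedSpace 𝕜 E] {f : α → 𝕜} {g : α → E} (hf : LocallyLipschitzOn s f)
    (hg : LocallyLipschitzOn s g) : LocallyLipschitzOn s fun x => f x • g x := by
  rw [locallyLipschitzOn_iff_restrict] at hf hg ⊢
  exact (contDiff_smul (𝕜 := 𝕜) (n := 1)).locallyLipschitz.comp (hf.prodMk hg)

end LocallyLipschitz

lemma ENNReal.rpow_half_le_add_of_le_add_sq {X Y Z : ℝ≥0∞} (h : X ≤ Y + Z ^ 2) :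
    X ^ ((1:ℝ)/2) ≤ Y ^ ((1:ℝ)/2) + Z := by
  rw [one_div, ENNReal.rpow_inv_le_iff two_pos, ENNReal.rpow_two]
  have hY : (Y ^ (2:ℝ)⁻¹) ^ 2 = Y := by
    rw [← ENNReal.rpow_two, ← ENNReal.rpow_mul, inv_mul_cancel₀ two_ne_zero, ENNReal.rpow_one]
  calc X ≤ Y + Z ^ 2 := h
    _ ≤ (Y ^ (2:ℝ)⁻¹) ^ 2 + 2 * Y ^ (2:ℝ)⁻¹ * Z + Z ^ 2 := by rw [hY]; gcongr; exact le_self_add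
    _ = (Y ^ (2:ℝ)⁻¹ + Z) ^ 2 := (add_sq _ _).symm

lemma ordConnected_sIcc_s13 (r₁ : ℝ) (r₂ : EReal) : (sIcc r₁ r₂).OrdConnected :=
  ⟨fun _ hx _ hy _ hz => ⟨⟨hx.1.1.trans hz.1, (EReal.coe_le_coe_iff.2 hz.2).trans hy.1.2⟩,
    hx.2.trans_le hz.1⟩⟩

lemma sIcc_top {a : ℝ} (ha : 0 < a) : sIcc a ⊤ = Ici a := by
  ext x
  simp only [sIcc, mem_inter_iff, mem_ofPred_eq, le_top, and_true, mem_Ioi, mem_Ici]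
  exact ⟨And.left, fun hx => ⟨hx, ha.trans_le hx⟩⟩

lemma sIcc_zero_top : sIcc 0 ⊤ = Ioi 0 := by
  ext x
  simp only [sIcc, mem_inter_iff, mem_ofPred_eq, le_top, and_true, mem_Ioi]
  exact ⟨And.right, fun hx => ⟨hx.le, hx⟩⟩

section Hnorm

variable {ψ φ : ℝ → ℝ} {U : Set ℝ}

lemma HnormSqOn_congr (hU : IsOpen U) (h : EqOn ψ φ U) : HnormSqOn ψ U = HnormSqOn φ U := by
  refine setLIntegral_congr_fun hU.measurableSet fun r hr => ?_
  rw [h hr, (h.eventuallyEq_of_mem (hU.mem_nhds hr)).deriv_eq]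

lemma HnormSqOn_eq_zero (hU : IsOpen U) (h : EqOn ψ 0 U) : HnormSqOn ψ U = 0 := by
  rw [HnormSqOn_congr hU h]
  simp [HnormSqOn]

lemma HnormSqOn_Icc_le_of_affine {p A B k : ℝ} (hp : 0 < p)
    (hψ : EqOn ψ (fun x => A * x + B) (Ioo p (2 * p))) (hA : |A| * p ≤ k)
    (hk : ∀ x ∈ Ioo p (2 * p), |ψ x| ≤ k) :
    HnormSqOn ψ (Icc p (2 * p)) ≤ ENNReal.ofReal (3 * k ^ 2) := by
  have hpoint : ∀ x ∈ Ioo p (2 * p), ((deriv ψ x) ^ 2 + (ψ x) ^ 2 / x ^ 2) * x ≤ 3 * k ^ 2 / p := by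
    intro x hx
    have hd : deriv ψ x = A := by
      rw [(hψ.eventuallyEq_of_mem (isOpen_Ioo.mem_nhds hx)).deriv_eq]
      simp
    have hx0 : 0 < x := hp.trans hx.1
    have hψk : ψ x ^ 2 ≤ k ^ 2 := sq_le_sq' (abs_le.1 (hk x hx)).1 (abs_le.1 (hk x hx)).2
    have hAk : (A * p) ^ 2 ≤ k ^ 2 := by
      rw [← sq_abs, abs_mul, abs_of_pos hp]
      exact pow_le_pow_left₀ (by positivity) hA 2
    rw [hd, le_div_iff₀ hp]
    have h1 : A ^ 2 * x * p ≤ 2 * k ^ 2 := by nlinarith [hx.2]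
    have h2 : ψ x ^ 2 / x ^ 2 * x * p ≤ k ^ 2 := by
      rw [show ψ x ^ 2 / x ^ 2 * x * p = ψ x ^ 2 * (p / x) by field_simp]
      calc ψ x ^ 2 * (p / x) ≤ ψ x ^ 2 * 1 := by
            gcongr; exact (div_le_one hx0).2 hx.1.le
        _ ≤ k ^ 2 := by linarith
    nlinarith
  calc HnormSqOn ψ (Icc p (2 * p))
      = ∫⁻ x in Ioo p (2 * p), ENNReal.ofReal (((deriv ψ x) ^ 2 + (ψ x) ^ 2 / x ^ 2) * x) :=
        setLIntegral_congr Ioo_ae_eq_Icc.symm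
    _ ≤ ∫⁻ _ in Ioo p (2 * p), ENNReal.ofReal (3 * k ^ 2 / p) :=
        setLIntegral_mono' measurableSet_Ioo fun x hx => ENNReal.ofReal_le_ofReal (hpoint x hx)
    _ = ENNReal.ofReal (3 * k ^ 2) := by
        rw [setLIntegral_const, Real.volume_Ioo, ← ENNReal.ofReal_mul (by positivity)]
        congr 1
        field_simp
        ring

end Hnorm

noncomputable def extendBelow (a : ℝ) (f : ℝ → ℝ) (r : ℝ) : ℝ :=
  projIcc (0:ℝ) 1 zero_le_one (2 * r / a - 1) * f (max a r)

noncomputable def extendAbove (b : ℝ) (f : ℝ → ℝ) (r : ℝ) : ℝ :=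
  projIcc (0:ℝ) 1 zero_le_one (2 - r / b) * f (min r b)

lemma locallyLipschitz_projIcc_comp {g : ℝ → ℝ} (hg : ContDiff ℝ 1 g) :
    LocallyLipschitz fun r => (projIcc (0:ℝ) 1 zero_le_one (g r) : ℝ) :=
  ((LipschitzWith.subtype_val _).comp (LipschitzWith.projIcc _)).locallyLipschitz.comp
    hg.locallyLipschitz

lemma abs_projIcc_mul_le (t y : ℝ) : |(projIcc (0:ℝ) 1 zero_le_one t : ℝ) * y| ≤ |y| := by
  obtain ⟨h0, h1⟩ := (projIcc (0:ℝ) 1 zero_le_one t).2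
  rw [abs_mul, abs_of_nonneg h0]
  exact mul_le_of_le_one_left (abs_nonneg y) h1

section extendBelow

variable {a : ℝ} {f : ℝ → ℝ}

lemma extendBelow_of_le_half (ha : 0 < a) {x : ℝ} (hx : x ≤ a / 2) : extendBelow a f x = 0 := by
  have : 2 * x / a - 1 ≤ 0 := by rw [sub_nonpos, div_le_one ha]; linarith
  simp [extendBelow, projIcc_of_le_left _ this]

lemma extendBelow_of_mem_Icc (ha : 0 < a) {x : ℝ} (hx : x ∈ Icc (a / 2) a) :
    extendBelow a f x = 2 * f a / a * x - f a := by
  have h0 : 0 ≤ 2 * x / a - 1 := by rw [sub_nonneg, le_div_iff₀ ha]; linarith [hx.1]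
  have h1 : 2 * x / a - 1 ≤ 1 := by rw [sub_le_iff_le_add, div_le_iff₀ ha]; linarith [hx.2]
  rw [extendBelow, projIcc_of_mem _ ⟨h0, h1⟩, max_eq_left hx.2]
  ring

lemma extendBelow_of_le (ha : 0 < a) {x : ℝ} (hx : a ≤ x) : extendBelow a f x = f x := by
  have : 1 ≤ 2 * x / a - 1 := by rw [le_sub_iff_add_le, le_div_iff₀ ha]; linarith
  simp [extendBelow, projIcc_of_right_le _ this, max_eq_right hx]

lemma abs_extendBelow_le {x : ℝ} : |extendBelow a f x| ≤ |f (max a x)| :=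
  abs_projIcc_mul_le _ _

lemma locallyLipschitz_extendBelow (hf : LocallyLipschitzOn (Ici a) f) :
    LocallyLipschitz (extendBelow a f) := by
  have hcut := locallyLipschitz_projIcc_comp (g := fun r => 2 * r / a - 1) (by fun_prop)
  have hcomp := hf.comp_lipschitzWith (LipschitzWith.id.const_max a)
    (fun x _ => le_max_left a x : MapsTo (fun x => max a x) univ (Ici a))
  rw [← locallyLipschitzOn_univ] at hcut ⊢
  exact hcut.smul hcomp

lemma HnormSqOn_extendBelow_le (ha : 0 < a) :
    HnormSqOn (extendBelow a f) (Ioi 0) ≤ ENNReal.ofReal (3 * f a ^ 2) + HnormSqOn f (Ioi a) := by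
  have hcover : Ioi (0:ℝ) ⊆ (Ioo 0 (a / 2) ∪ Icc (a / 2) (2 * (a / 2))) ∪ Ioi a := by
    rw [mul_div_cancel₀ a two_ne_zero, union_assoc, Icc_union_Ioi_eq_Ici (by linarith),
      Ioo_union_Ici_eq_Ioi (by linarith)]
  have hzero : HnormSqOn (extendBelow a f) (Ioo 0 (a / 2)) = 0 :=
    HnormSqOn_eq_zero isOpen_Ioo fun x hx => extendBelow_of_le_half ha hx.2.le
  have hramp : HnormSqOn (extendBelow a f) (Icc (a / 2) (2 * (a / 2))) ≤
      ENNReal.ofReal (3 * |f a| ^ 2) := by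
    refine HnormSqOn_Icc_le_of_affine (half_pos ha) (A := 2 * f a / a) (B := - f a)
      (fun x hx => ?_) ?_ fun x hx => ?_
    · rw [mul_div_cancel₀ a two_ne_zero] at hx
      rw [extendBelow_of_mem_Icc ha (Ioo_subset_Icc_self hx), sub_eq_add_neg]
    · rw [abs_div, abs_mul, abs_two, abs_of_pos ha]
      exact le_of_eq (by field_simp)
    · rw [mul_div_cancel₀ a two_ne_zero] at hx
      simpa [max_eq_left hx.2.le] using abs_extendBelow_le (f := f) (a := a) (x := x)
  have hrest : HnormSqOn (extendBelow a f) (Ioi a) = HnormSqOn f (Ioi a) :=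
    HnormSqOn_congr isOpen_Ioi fun x hx => extendBelow_of_le ha (le_of_lt hx)
  calc HnormSqOn (extendBelow a f) (Ioi 0)
      ≤ HnormSqOn (extendBelow a f) (Ioo 0 (a / 2)) +
          HnormSqOn (extendBelow a f) (Icc (a / 2) (2 * (a / 2))) +
          HnormSqOn (extendBelow a f) (Ioi a) :=
        (lintegral_mono_set hcover).trans ((lintegral_union_le _ _ _).trans
          (add_le_add (lintegral_union_le _ _ _) le_rfl))
    _ ≤ ENNReal.ofReal (3 * f a ^ 2) + HnormSqOn f (Ioi a) := by
        rw [hzero, zero_add, hrest, ← sq_abs]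
        gcongr

end extendBelow

section extendAbove

variable {b : ℝ} {f : ℝ → ℝ}

lemma extendAbove_of_le (hb : 0 < b) {x : ℝ} (hx : x ≤ b) : extendAbove b f x = f x := by
  have : 1 ≤ 2 - x / b := by rw [le_sub_comm, div_le_iff₀ hb]; linarith
  simp [extendAbove, projIcc_of_right_le _ this, min_eq_left hx]

lemma extendAbove_of_mem_Icc (hb : 0 < b) {x : ℝ} (hx : x ∈ Icc b (2 * b)) :
    extendAbove b f x = -f b / b * x + 2 * f b := by
  have h0 : 0 ≤ 2 - x / b := by rw [sub_nonneg, div_le_iff₀ hb]; linarith [hx.2]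
  have h1 : 2 - x / b ≤ 1 := by rw [sub_le_comm, le_div_iff₀ hb]; linarith [hx.1]
  rw [extendAbove, projIcc_of_mem _ ⟨h0, h1⟩, min_eq_right hx.1]
  ring

lemma extendAbove_of_two_mul_le (hb : 0 < b) {x : ℝ} (hx : 2 * b ≤ x) :
    extendAbove b f x = 0 := by
  have : 2 - x / b ≤ 0 := by rw [sub_nonpos, le_div_iff₀ hb]; linarith
  simp [extendAbove, projIcc_of_le_left _ this]

lemma abs_extendAbove_le {x : ℝ} : |extendAbove b f x| ≤ |f (min x b)| :=
  abs_projIcc_mul_le _ _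

lemma locallyLipschitzOn_extendAbove {s t : Set ℝ} (hf : LocallyLipschitzOn s f)
    (hmaps : MapsTo (fun x => min x b) t s) : LocallyLipschitzOn t (extendAbove b f) :=
  (locallyLipschitz_projIcc_comp (g := fun r => 2 - r / b) (by fun_prop)).locallyLipschitzOn.smul
    (hf.comp_lipschitzWith (LipschitzWith.id.min_const b) hmaps)

lemma HnormSqOn_extendAbove_le {a : ℝ} (hb : 0 < b) (hab : a < b) :
    HnormSqOn (extendAbove b f) (Ioi a) ≤ HnormSqOn f (Ioo a b) + ENNReal.ofReal (3 * f b ^ 2) := by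
  have hcover : Ioi a ⊆ Ioo a b ∪ (Icc b (2 * b) ∪ Ioi (2 * b)) := by
    rw [Icc_union_Ioi_eq_Ici (by linarith), Ioo_union_Ici_eq_Ioi hab]
  have hbody : HnormSqOn (extendAbove b f) (Ioo a b) = HnormSqOn f (Ioo a b) :=
    HnormSqOn_congr isOpen_Ioo fun x hx => extendAbove_of_le hb hx.2.le
  have hramp : HnormSqOn (extendAbove b f) (Icc b (2 * b)) ≤ ENNReal.ofReal (3 * |f b| ^ 2) := by
    refine HnormSqOn_Icc_le_of_affine hb (A := -f b / b) (B := 2 * f b)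
      (fun x hx => extendAbove_of_mem_Icc hb (Ioo_subset_Icc_self hx)) ?_ fun x hx => ?_
    · rw [abs_div, abs_neg, abs_of_pos hb, div_mul_cancel₀ _ hb.ne']
    · simpa [min_eq_right hx.1.le] using abs_extendAbove_le (f := f) (b := b) (x := x)
  have hzero : HnormSqOn (extendAbove b f) (Ioi (2 * b)) = 0 :=
    HnormSqOn_eq_zero isOpen_Ioi fun x hx => extendAbove_of_two_mul_le hb (le_of_lt hx)
  calc HnormSqOn (extendAbove b f) (Ioi a)
      ≤ HnormSqOn (extendAbove b f) (Ioo a b) + (HnormSqOn (extendAbove b f) (Icc b (2 * b)) +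
          HnormSqOn (extendAbove b f) (Ioi (2 * b))) :=
        (lintegral_mono_set hcover).trans ((lintegral_union_le _ _ _).trans
          (add_le_add le_rfl (lintegral_union_le _ _ _)))
    _ ≤ HnormSqOn f (Ioo a b) + ENNReal.ofReal (3 * f b ^ 2) := by
        rw [hbody, hzero, add_zero, ← sq_abs]
        gcongr

end extendAbove

lemma exists_extension_above {r₁ : ℝ} {r₂ : EReal} (h0 : 0 ≤ r₁) (hlt : (r₁ : EReal) < r₂)
    {φ : ℝ → ℝ} (hφ : LocallyLipschitzOn (sIcc r₁ r₂) φ) :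
    ∃ f : ℝ → ℝ, LocallyLipschitzOn (sIcc r₁ ⊤) f ∧ EqOn f φ (sIcc r₁ r₂) ∧
      ∀ M : ℝ, (∀ x ∈ sIcc r₁ r₂, |φ x| ≤ M) →
        (∀ x ∈ sIcc r₁ ⊤, |f x| ≤ M) ∧
          HnormSqOn f (Ioi r₁) ≤ HnormSqOn φ (sIcc r₁ r₂) + ENNReal.ofReal (3 * M ^ 2) := by
  induction r₂ using EReal.rec with
  | bot => exact absurd hlt not_lt_bot
  | top =>
    refine ⟨φ, hφ, eqOn_refl _ _, fun M hM => ⟨hM, le_add_right (lintegral_mono_set ?_)⟩⟩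
    exact fun x hx => ⟨⟨hx.le, le_top⟩, h0.trans_lt hx⟩
  | coe b =>
    have hr₁b : r₁ < b := EReal.coe_lt_coe_iff.1 hlt
    have hb : 0 < b := h0.trans_lt hr₁b
    have hmem : ∀ {x}, x ∈ sIcc r₁ b ↔ x ∈ Icc r₁ b ∧ 0 < x := by
      simp [sIcc, EReal.coe_le_coe_iff]
    have hmin : MapsTo (fun x => min x b) (sIcc r₁ ⊤) (sIcc r₁ b) := fun x hx =>
      hmem.2 ⟨⟨le_min hx.1.1 hr₁b.le, min_le_right x b⟩, lt_min hx.2 hb⟩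
    refine ⟨extendAbove b φ, locallyLipschitzOn_extendAbove hφ hmin,
      fun x hx => extendAbove_of_le hb (hmem.1 hx).1.2, fun M hM => ⟨fun x hx => ?_, ?_⟩⟩
    · exact abs_extendAbove_le.trans (hM _ (hmin hx))
    · have hbM := hM b (hmem.2 ⟨⟨hr₁b.le, le_rfl⟩, hb⟩)
      calc HnormSqOn (extendAbove b φ) (Ioi r₁)
          ≤ HnormSqOn φ (Ioo r₁ b) + ENNReal.ofReal (3 * φ b ^ 2) :=
            HnormSqOn_extendAbove_le hb hr₁b
        _ ≤ HnormSqOn φ (sIcc r₁ b) + ENNReal.ofReal (3 * M ^ 2) := by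
            gcongr ?_ + ENNReal.ofReal (3 * ?_)
            · exact lintegral_mono_set fun x hx => hmem.2 ⟨Ioo_subset_Icc_self hx, h0.trans_lt hx.1⟩
            · exact sq_le_sq' (abs_le.1 hbM).1 (abs_le.1 hbM).2

lemma exists_extension_below {a : ℝ} (ha : 0 ≤ a) {f : ℝ → ℝ}
    (hf : LocallyLipschitzOn (sIcc a ⊤) f) :
    ∃ g : ℝ → ℝ, LocallyLipschitzOn (Ioi 0) g ∧ EqOn g f (sIcc a ⊤) ∧
      ∀ M : ℝ, (∀ x ∈ sIcc a ⊤, |f x| ≤ M) →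
        HnormSqOn g (Ioi 0) ≤ HnormSqOn f (Ioi a) + ENNReal.ofReal (3 * M ^ 2) := by
  rcases ha.eq_or_lt with rfl | ha
  · rw [sIcc_zero_top] at hf ⊢
    exact ⟨f, hf, eqOn_refl _ _, fun M _ => le_self_add⟩
  rw [sIcc_top ha] at hf ⊢
  refine ⟨extendBelow a f, (locallyLipschitz_extendBelow hf).locallyLipschitzOn,
    fun x hx => extendBelow_of_le ha hx, fun M hM => ?_⟩
  have haM := hM a self_mem_Ici
  calc HnormSqOn (extendBelow a f) (Ioi 0)
      ≤ ENNReal.ofReal (3 * f a ^ 2) + HnormSqOn f (Ioi a) := HnormSqOn_extendBelow_le ha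
    _ ≤ HnormSqOn f (Ioi a) + ENNReal.ofReal (3 * M ^ 2) := by
        rw [add_comm]
        gcongr _ + ENNReal.ofReal (3 * ?_)
        exact sq_le_sq' (abs_le.1 haM).1 (abs_le.1 haM).2

lemma exists_extension {r₁ : ℝ} {r₂ : EReal} (h0 : 0 ≤ r₁) (hlt : (r₁ : EReal) < r₂)
    {φ : ℝ → ℝ} (hφ : LocallyLipschitzOn (sIcc r₁ r₂) φ) :
    ∃ ψ : ℝ → ℝ, LocallyLipschitzOn (Ioi 0) ψ ∧ EqOn ψ φ (sIcc r₁ r₂) ∧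
      ∀ M : ℝ, (∀ x ∈ sIcc r₁ r₂, |φ x| ≤ M) →
        HnormSqOn ψ (Ioi 0) ≤ HnormSqOn φ (sIcc r₁ r₂) + ENNReal.ofReal (3 * M) ^ 2 := by
  obtain ⟨f, hf_lip, hf_eq, hf_bound⟩ := exists_extension_above h0 hlt hφ
  obtain ⟨ψ, hψ_lip, hψ_eq, hψ_bound⟩ := exists_extension_below h0 hf_lip
  have hsub : sIcc r₁ r₂ ⊆ sIcc r₁ ⊤ := fun x hx => ⟨⟨hx.1.1, le_top⟩, hx.2⟩
  refine ⟨ψ, hψ_lip, (hψ_eq.mono hsub).trans hf_eq, fun M hM => ?_⟩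
  obtain ⟨hf_bdd, hf_norm⟩ := hf_bound M hM
  have hM0 : 0 ≤ M := by
    obtain ⟨x, hx₁, hx₂⟩ := EReal.lt_iff_exists_real_btwn.1 hlt
    have hx₁ : r₁ < x := EReal.coe_lt_coe_iff.1 hx₁
    exact (abs_nonneg _).trans (hM x ⟨⟨hx₁.le, hx₂.le⟩, h0.trans_lt hx₁⟩)
  calc HnormSqOn ψ (Ioi 0) ≤ HnormSqOn f (Ioi r₁) + ENNReal.ofReal (3 * M ^ 2) := hψ_bound M hf_bdd
    _ ≤ HnormSqOn φ (sIcc r₁ r₂) + ENNReal.ofReal (3 * M ^ 2) + ENNReal.ofReal (3 * M ^ 2) :=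
        add_le_add_left hf_norm _
    _ ≤ HnormSqOn φ (sIcc r₁ r₂) + ENNReal.ofReal (3 * M) ^ 2 := by
        rw [add_assoc, ← ENNReal.ofReal_add (by positivity) (by positivity),
          ← ENNReal.ofReal_pow (by positivity)]
        gcongr
        nlinarith

/-- extension lemma in `H`: given the universal constant `c` of the
weighted Sobolev embedding, any bounded `C¹` function `φ` with finite `H`-norm on
`[r₁,r₂] ∩ (0,∞)` (with `r₂` possibly `+∞`) extends to a locally Lipschitz function `ψ`
on `(0,∞)` with `‖ψ‖_H ≤ ‖φ‖_{H([r₁,r₂])} + 3‖φ‖_{L^∞([r₁,r₂])}`; moreover if `r₂ ≥ 2r₁`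
then `‖ψ‖_H ≤ (3c+1)‖φ‖_{H([r₁,r₂])}`. -/
theorem extension_in_H (c : ℝ) (hc : 0 < c)
    (hembed : ∀ (r₁ : ℝ) (r₂ : EReal), 0 ≤ r₁ → (r₁ : EReal) < r₂ →
      ((2 * r₁ : ℝ) : EReal) ≤ r₂ →
      ∀ φ : ℝ → ℝ, ContDiffOn ℝ 1 φ (sIcc r₁ r₂) →
      ∀ r ∈ sIcc r₁ r₂,
        ENNReal.ofReal |φ r| ≤ ENNReal.ofReal c * (HnormSqOn φ (sIcc r₁ r₂)) ^ ((1:ℝ)/2)) :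
    ∀ (r₁ : ℝ) (r₂ : EReal), 0 ≤ r₁ → (r₁ : EReal) < r₂ →
    ∀ φ : ℝ → ℝ, ContDiffOn ℝ 1 φ (sIcc r₁ r₂) →
    (∃ M : ℝ, ∀ r ∈ sIcc r₁ r₂, |φ r| ≤ M) →
    HnormSqOn φ (sIcc r₁ r₂) < ⊤ →
    ∃ ψ : ℝ → ℝ,
      -- `ψ` is locally Lipschitz on `(0,∞)`
      (∀ K : Set ℝ, IsCompact K → K ⊆ Ioi 0 → ∃ L : NNReal, LipschitzOnWith L ψ K) ∧
      -- `ψ` extends `φ`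
      (∀ r ∈ sIcc r₁ r₂, ψ r = φ r) ∧
      -- `‖ψ‖_H ≤ ‖φ‖_{H([r₁,r₂])} + 3 M` for every `L^∞` bound `M` of `φ`
      (∀ M : ℝ, (∀ r ∈ sIcc r₁ r₂, |φ r| ≤ M) →
        (HnormSqOn ψ (Ioi 0)) ^ ((1:ℝ)/2) ≤
          (HnormSqOn φ (sIcc r₁ r₂)) ^ ((1:ℝ)/2) + ENNReal.ofReal (3 * M)) ∧
      -- the improved bound when `r₂ ≥ 2 r₁`
      (((2 * r₁ : ℝ) : EReal) ≤ r₂ →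
        (HnormSqOn ψ (Ioi 0)) ^ ((1:ℝ)/2) ≤
          ENNReal.ofReal (3 * c + 1) * (HnormSqOn φ (sIcc r₁ r₂)) ^ ((1:ℝ)/2)) := by
  intro r₁ r₂ h0 hlt φ hφ _ hfin
  obtain ⟨ψ, hψ_lip, hψ_eq, hψ_bound⟩ :=
    exists_extension h0 hlt (hφ.locallyLipschitzOn (ordConnected_sIcc_s13 r₁ r₂).convex)
  refine ⟨ψ, fun K hK hK0 => (hψ_lip.mono hK0).exists_lipschitzOnWith_of_compact hK, hψ_eq,
    fun M hM => ENNReal.rpow_half_le_add_of_le_add_sq (hψ_bound M hM), fun h2r => ?_⟩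
  set S := HnormSqOn φ (sIcc r₁ r₂) ^ ((1:ℝ)/2)
  have hS : S ≠ ⊤ := ENNReal.rpow_ne_top_of_nonneg (by norm_num) hfin.ne
  have hφ_bound : ∀ r ∈ sIcc r₁ r₂, |φ r| ≤ c * S.toReal := fun r hr => by
    have : ENNReal.ofReal |φ r| ≤ ENNReal.ofReal c * S := hembed r₁ r₂ h0 hlt h2r φ hφ r hr
    rwa [← ENNReal.ofReal_toReal hS, ← ENNReal.ofReal_mul hc.le,
      ENNReal.ofReal_le_ofReal_iff (by positivity)] at this
  calc HnormSqOn ψ (Ioi 0) ^ ((1:ℝ)/2) ≤ S + ENNReal.ofReal (3 * (c * S.toReal)) :=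
        ENNReal.rpow_half_le_add_of_le_add_sq (hψ_bound _ hφ_bound)
    _ = ENNReal.ofReal (S.toReal + 3 * (c * S.toReal)) := by
        rw [ENNReal.ofReal_add (by positivity) (by positivity), ENNReal.ofReal_toReal hS]
    _ = ENNReal.ofReal (3 * c + 1) * S := by
        conv_rhs => rw [← ENNReal.ofReal_toReal hS]
        rw [← ENNReal.ofReal_mul (by positivity)]
        ring_nf
end

section
/- Let g : ℝ → ℝ be continuous and G(x) = ∫₀ˣ |g(y)| dy. Let 0 ≤ r₁ < r₂ ≤ ∞ and let ψ be a C¹ function on (r₁,r₂) with finite energy E((ψ,0); r₁,r₂) = ∫_{r₁}^{r₂} ((ψ'(r))² + g(ψ(r))²/r²) r dr < ∞. Then the limits L₁ := lim_{r↓r₁} G(ψ(r)) and L₂ := lim_{r↑r₂} G(ψ(r)) exist, and 2 |L₂ − L₁| ≤ E((ψ,0); r₁,r₂). -/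
/-! By the chain rule `(G ∘ ψ)' = |g ∘ ψ| ψ'`, and by AM-GM
`2 |g(ψ)| |ψ'| ≤ ((ψ')² + g(ψ)²/r²) r`, so this derivative is integrable on `(r₁, r₂)` with
`L¹` norm at most half the energy. Thus `G ∘ ψ` is, up to a constant, the primitive of an
integrable function on `ℝ`; it has limits at both ends of the interval, and each increment
`G(ψ(y)) - G(ψ(x))`, hence also the gap between the limits, is bounded by that `L¹` norm. -/

open MeasureTheory Filter Topology Set
open scoped ENNReal

namespace EReal

theorem comap_coe_nhds_top : comap ((↑) : ℝ → EReal) (𝓝 ⊤) = atTop :=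
  (nhds_top_basis.comap _).eq_of_same_basis <| by
    simpa only [preimage_coe_Ioi] using atTop_basis_Ioi

theorem comap_coe_nhds_bot : comap ((↑) : ℝ → EReal) (𝓝 ⊥) = atBot :=
  (nhds_bot_basis.comap _).eq_of_same_basis <| by
    simpa only [preimage_coe_Iio] using atBot_basis_Iio

theorem comap_coe_nhds_coe (x : ℝ) : comap ((↑) : ℝ → EReal) (𝓝 x) = 𝓝 x := by
  rw [nhds_coe, comap_map coe_injective]

end EReal

theorem MeasureTheory.Integrable.exists_tendsto_comap_coe_nhds_primitive {f : ℝ → ℝ}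
    (hf : Integrable f) (m : ℝ) (b : EReal) :
    ∃ L, Tendsto (fun x => ∫ t in m..x, f t) (comap (↑) (𝓝 b)) (𝓝 L) := by
  induction b using EReal.rec with
  | bot =>
    refine ⟨-∫ t in Iic m, f t, ?_⟩
    rw [EReal.comap_coe_nhds_bot]
    exact (intervalIntegral_tendsto_integral_Iic m hf.integrableOn tendsto_id).neg.congr
      fun x => (intervalIntegral.integral_symm x m).symm
  | coe x =>
    rw [EReal.comap_coe_nhds_coe]
    exact ⟨_, (hf.continuous_primitive m).tendsto x⟩
  | top =>
    rw [EReal.comap_coe_nhds_top]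
    exact ⟨_, intervalIntegral_tendsto_integral_Ioi m hf.integrableOn tendsto_id⟩

theorem self_mem_approach {s : Set ℝ} {b : EReal} : s ∈ approach s b :=
  mem_inf_of_right (mem_principal_self s)

theorem approach_neBot {s : Set ℝ} {b : EReal} (hb : b ∈ closure ((↑) '' s)) :
    (approach s b).NeBot := by
  have : approach s b = comap (↑) (𝓝[(↑) '' s] b) := by
    rw [approach, nhdsWithin, comap_inf, comap_principal,
      preimage_image_eq _ EReal.coe_injective]
  rw [this]
  exact (mem_closure_iff_nhdsWithin_neBot.1 hb).comap_of_range_mem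
    (mem_of_superset self_mem_nhdsWithin (image_subset_range _ _))

theorem sIoo_eq_preimage (r₁ : ℝ) (r₂ : EReal) : sIoo r₁ r₂ = (↑) ⁻¹' Ioo (r₁ : EReal) r₂ := by
  ext r; simp [sIoo, EReal.coe_lt_coe_iff]

theorem image_coe_sIoo (r₁ : ℝ) (r₂ : EReal) : (↑) '' sIoo r₁ r₂ = Ioo (r₁ : EReal) r₂ := by
  rw [sIoo_eq_preimage, image_preimage_eq_inter_range, inter_eq_left, EReal.range_coe]
  rintro x ⟨h1, h2⟩
  simp only [mem_compl_iff, mem_insert_iff, mem_singleton_iff, not_or]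
  exact ⟨(EReal.bot_lt_coe r₁ |>.trans h1).ne', (h2.trans_le le_top).ne⟩

theorem nonempty_sIoo {r₁ : ℝ} {r₂ : EReal} (h12 : (r₁ : EReal) < r₂) : (sIoo r₁ r₂).Nonempty :=
  (image_coe_sIoo r₁ r₂ ▸ nonempty_Ioo.2 h12).of_image

theorem approach_sIoo_neBot {r₁ : ℝ} {r₂ b : EReal} (h12 : (r₁ : EReal) < r₂)
    (hb : b ∈ Icc (r₁ : EReal) r₂) : (approach (sIoo r₁ r₂) b).NeBot := by
  rw [← closure_Ioo h12.ne, ← image_coe_sIoo] at hb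
  exact approach_neBot hb

theorem isOpen_sIoo (r₁ : ℝ) (r₂ : EReal) : IsOpen (sIoo r₁ r₂) := by
  rw [sIoo_eq_preimage]
  exact isOpen_Ioo.preimage continuous_coe_real_ereal

theorem ordConnected_sIoo (r₁ : ℝ) (r₂ : EReal) : (sIoo r₁ r₂).OrdConnected := by
  rw [sIoo_eq_preimage]
  exact ordConnected_Ioo.preimage_mono EReal.coe_strictMono.monotone

section Variation

variable {s : Set ℝ} {f f' : ℝ → ℝ}

theorem eq_add_integral_indicator_of_hasDerivAt (hs : s.OrdConnected)
    (hderiv : ∀ x ∈ s, HasDerivAt f (f' x) x) (hf' : IntegrableOn f' s) {m x : ℝ} (hm : m ∈ s)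
    (hx : x ∈ s) : f x = f m + ∫ t in m..x, s.indicator f' t := by
  have hsub : uIcc m x ⊆ s := hs.uIcc_subset hm hx
  rw [intervalIntegral.integral_congr fun t ht => indicator_of_mem (hsub ht) f',
    intervalIntegral.integral_eq_sub_of_hasDerivAt (fun t ht => hderiv t (hsub ht))
      (hf'.mono_set hsub).intervalIntegrable]
  ring

theorem abs_sub_le_setIntegral_abs_of_hasDerivAt (hs : s.OrdConnected)
    (hderiv : ∀ x ∈ s, HasDerivAt f (f' x) x) (hf' : IntegrableOn f' s) {x y : ℝ} (hx : x ∈ s)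
    (hy : y ∈ s) : |f y - f x| ≤ ∫ t in s, |f' t| := by
  have hsub : uIcc x y ⊆ s := hs.uIcc_subset hx hy
  rw [← intervalIntegral.integral_eq_sub_of_hasDerivAt (fun t ht => hderiv t (hsub ht))
    (hf'.mono_set hsub).intervalIntegrable]
  calc |∫ t in x..y, f' t| ≤ ∫ t in uIoc x y, |f' t| := by
        simpa only [Real.norm_eq_abs] using
          intervalIntegral.norm_integral_le_integral_norm_uIoc (f := f') (a := x) (b := y)
    _ ≤ ∫ t in s, |f' t| :=
        setIntegral_mono_set hf'.abs (ae_of_all _ fun _ => abs_nonneg _)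
          (uIoc_subset_uIcc.trans hsub).eventuallyLE

theorem exists_tendsto_approach_of_hasDerivAt (hs : s.OrdConnected) (hne : s.Nonempty)
    (hderiv : ∀ x ∈ s, HasDerivAt f (f' x) x) (hf' : IntegrableOn f' s) (b : EReal) :
    ∃ L, Tendsto f (approach s b) (𝓝 L) := by
  obtain ⟨m, hm⟩ := hne
  obtain ⟨L, hL⟩ := ((integrable_indicator_iff hs.measurableSet).2 hf'
    ).exists_tendsto_comap_coe_nhds_primitive m b
  refine ⟨f m + L, (tendsto_const_nhds.add (hL.mono_left inf_le_left)).congr' ?_⟩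
  filter_upwards [self_mem_approach] with x hx
  exact (eq_add_integral_indicator_of_hasDerivAt hs hderiv hf' hm hx).symm

theorem abs_sub_le_of_tendsto_approach {a b : EReal} [(approach s a).NeBot]
    [(approach s b).NeBot] {La Lb C : ℝ} (ha : Tendsto f (approach s a) (𝓝 La))
    (hb : Tendsto f (approach s b) (𝓝 Lb)) (hC : ∀ x ∈ s, ∀ y ∈ s, |f y - f x| ≤ C) :
    |Lb - La| ≤ C := by
  refine le_of_tendsto ((hb.comp tendsto_snd).sub (ha.comp tendsto_fst)).abs ?_
  filter_upwards [prod_mem_prod self_mem_approach self_mem_approach] with p hp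
  exact hC p.1 hp.1 p.2 hp.2

end Variation

theorem hasDerivAt_Gfun {g : ℝ → ℝ} (hg : Continuous g) (x : ℝ) :
    HasDerivAt (Gfun g) (|g x|) x :=
  (hg.abs.integral_hasStrictDerivAt 0 x).hasDerivAt

theorem two_mul_abs_mul_abs_le {a c r : ℝ} (hr : 0 < r) :
    2 * (|c| * |a|) ≤ (a ^ 2 + c ^ 2 / r ^ 2) * r := by
  have key : 0 ≤ (|a| * r - |c|) ^ 2 / r := by positivity
  have expand : (a ^ 2 + c ^ 2 / r ^ 2) * r - 2 * (|c| * |a|) = (|a| * r - |c|) ^ 2 / r := by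
    field_simp
    rw [← sq_abs a, ← sq_abs c]
    ring
  linarith

theorem two_mul_lintegral_enorm_le_energyOn (g φ : ℝ → ℝ) {s : Set ℝ} (hs : MeasurableSet s)
    (hpos : ∀ r ∈ s, 0 < r) :
    2 * ∫⁻ r in s, ‖|g (φ r)| * deriv φ r‖ₑ ≤ energyOn g φ (fun _ => 0) s := by
  rw [← lintegral_const_mul' _ _ ENNReal.ofNat_ne_top]
  refine setLIntegral_mono' hs fun r hr => ?_
  rw [Real.enorm_eq_ofReal_abs, ← ENNReal.ofReal_ofNat 2, ← ENNReal.ofReal_mul zero_le_two]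
  refine ENNReal.ofReal_le_ofReal ?_
  simpa [abs_mul] using two_mul_abs_mul_abs_le (hpos r hr)

/-- energy controls the variation of `G∘ψ`: for a `C¹` map `ψ` of
finite energy on `(r₁,r₂)` (with `r₂` possibly `+∞`), the limits of `G(ψ(r))` at both
endpoints exist, and twice their gap is bounded by the energy. -/
theorem energy_controls_G_variation
    (g : ℝ → ℝ) (hg : Continuous g)
    (r₁ : ℝ) (r₂ : EReal) (h0 : 0 ≤ r₁) (h12 : (r₁ : EReal) < r₂)
    (ψ : ℝ → ℝ) (hψ : ContDiffOn ℝ 1 ψ (sIoo r₁ r₂))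
    (hE : energyOn g ψ (fun _ => 0) (sIoo r₁ r₂) < ⊤) :
    ∃ L₁ L₂ : ℝ,
      Tendsto (fun r => Gfun g (ψ r)) (approach (sIoo r₁ r₂) (r₁ : EReal)) (𝓝 L₁) ∧
      Tendsto (fun r => Gfun g (ψ r)) (approach (sIoo r₁ r₂) r₂) (𝓝 L₂) ∧
      ENNReal.ofReal (2 * |L₂ - L₁|) ≤ energyOn g ψ (fun _ => 0) (sIoo r₁ r₂) := by
  set s := sIoo r₁ r₂
  have hs_open : IsOpen s := isOpen_sIoo r₁ r₂
  have hs : s.OrdConnected := ordConnected_sIoo r₁ r₂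
  set F := fun r => |g (ψ r)| * deriv ψ r
  have hderiv : ∀ r ∈ s, HasDerivAt (fun r => Gfun g (ψ r)) (F r) r := fun r hr =>
    (hasDerivAt_Gfun hg (ψ r)).comp r
      ((hψ.differentiableOn one_ne_zero).differentiableAt (hs_open.mem_nhds hr)).hasDerivAt
  have hbound : 2 * ∫⁻ r in s, ‖F r‖ₑ ≤ energyOn g ψ (fun _ => 0) s :=
    two_mul_lintegral_enorm_le_energyOn g ψ hs.measurableSet fun r hr => h0.trans_lt hr.1
  have hF : IntegrableOn F s :=
    ⟨((hg.comp_continuousOn hψ.continuousOn).abs.mul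
        (hψ.continuousOn_deriv_of_isOpen hs_open le_rfl)).aestronglyMeasurable hs.measurableSet,
      ENNReal.lt_top_of_mul_ne_top_right (hbound.trans_lt hE).ne two_ne_zero⟩
  obtain ⟨L₁, hL₁⟩ := exists_tendsto_approach_of_hasDerivAt hs (nonempty_sIoo h12) hderiv hF r₁
  obtain ⟨L₂, hL₂⟩ := exists_tendsto_approach_of_hasDerivAt hs (nonempty_sIoo h12) hderiv hF r₂
  have := approach_sIoo_neBot h12 (left_mem_Icc.2 h12.le)
  have := approach_sIoo_neBot h12 (right_mem_Icc.2 h12.le)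
  refine ⟨L₁, L₂, hL₁, hL₂, ?_⟩
  have hvar : |L₂ - L₁| ≤ ∫ r in s, ‖F r‖ := abs_sub_le_of_tendsto_approach hL₁ hL₂
    fun x hx y hy => abs_sub_le_setIntegral_abs_of_hasDerivAt hs hderiv hF hx hy
  calc ENNReal.ofReal (2 * |L₂ - L₁|) ≤ ENNReal.ofReal (2 * ∫ r in s, ‖F r‖) := by gcongr
    _ = 2 * ∫⁻ r in s, ‖F r‖ₑ := by
      rw [ENNReal.ofReal_mul zero_le_two, ENNReal.ofReal_ofNat,
        ofReal_integral_norm_eq_lintegral_enorm hF]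
    _ ≤ _ := hbound
end
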